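/- arXiv:2501.03751 — 8 statements merged into one kernel-verified Lean document; each statement's English description precedes it below -/
import Mathlib

section
/- Let F, G ∈ 𝓕(ℝ) and a ∈ (0,1). Then there exist ε > 0 and functions Φ, Ψ ∈ 𝓕(ℝ) that are infinitely differentiable with all derivatives bounded, such that the closure of T^{aF,aG} plus the closed ball of radius ε is contained in T^{Φ,Ψ}, and the closure of T^{Φ,Ψ} plus the closed ball of radius ε is contained in T^{F,G}. -/
open Set Pointwise


open MeasureTheory Metric

noncomputable def gker (c : ℝ) (w : ℂ) : ℂ := Complex.exp (-(c : ℂ) * w ^ 2)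

noncomputable def gsm (H : ℝ → ℝ) (c : ℝ) (z : ℂ) : ℂ :=
  ∫ t : ℝ, (H t : ℂ) * gker c (z - (t : ℂ))

lemma norm_gker (c : ℝ) (w : ℂ) :
    ‖gker c w‖ = Real.exp (-c * (w.re ^ 2 - w.im ^ 2)) := by
  rw [gker, Complex.norm_exp]
  congr 1
  simp [Complex.mul_re, pow_two]

lemma hasDerivAt_gker (c : ℝ) (t : ℝ) (z : ℂ) :
    HasDerivAt (fun z : ℂ => gker c (z - (t : ℂ)))
      (gker c (z - (t : ℂ)) * (-(c : ℂ) * (2 * (z - (t : ℂ))))) z := by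
  have h1 : HasDerivAt (fun z : ℂ => -(c : ℂ) * (z - (t : ℂ)) ^ 2)
      (-(c : ℂ) * (2 * (z - (t : ℂ)))) z := by
    have := (((hasDerivAt_id z).sub_const (t : ℂ)).pow 2).const_mul (-(c : ℂ))
    simpa [mul_comm, mul_assoc, mul_left_comm] using this
  simpa [gker] using h1.cexp

example : True := trivial

lemma integrable_gauss_aux {b : ℝ} (hb : 0 < b) (B x₀ : ℝ) (hB : 0 ≤ B) :
    Integrable (fun t : ℝ => (|x₀ - t| + B) * Real.exp (-b * (x₀ - t) ^ 2)) := by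
  have h1 : Integrable (fun s : ℝ => (|s| + B) * Real.exp (-b * s ^ 2)) := by
    have h2 : Integrable (fun s : ℝ => s * Real.exp (-b * s ^ 2)) := by
      simpa using integrable_rpow_mul_exp_neg_mul_sq hb (by norm_num : (-1:ℝ) < 1)
    have h3 := h2.abs
    have h4 := (integrable_exp_neg_mul_sq hb).const_mul B
    have h5 := h3.add h4
    have heq : (fun s : ℝ => (|s| + B) * Real.exp (-b * s ^ 2)) =
        fun s : ℝ => |s * Real.exp (-b * s ^ 2)| + B * Real.exp (-b * s ^ 2) := by
      funext s
      rw [abs_mul, abs_of_pos (Real.exp_pos _)]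
      ring
    rw [heq]
    exact h5
  exact (integrable_comp_sub_left _ x₀).mpr h1

lemma gsm_hasDerivAt (H : ℝ → ℝ) (M c : ℝ) (hc : 0 < c) (hH : Continuous H)
    (hM : ∀ t, |H t| ≤ M) (z₀ : ℂ) :
    HasDerivAt (gsm H c)
      (∫ t : ℝ, (H t : ℂ) * (gker c (z₀ - (t : ℂ)) * (-(c:ℂ) * (2 * (z₀ - (t:ℂ)))))) z₀ := by
  have hM0 : 0 ≤ M := le_trans (abs_nonneg _) (hM 0)
  set B : ℝ := |z₀.im| + 2 with hB
  set A : ℝ := c * (4 + (|z₀.im| + 1) ^ 2) with hA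
  set bound : ℝ → ℝ := fun t =>
    2 * c * M * ((|z₀.re - t| + B) * Real.exp (A + -(3 * c / 4) * (z₀.re - t) ^ 2)) with hbd
  have hcont : ∀ z : ℂ, Continuous fun t : ℝ => (H t : ℂ) * gker c (z - (t : ℂ)) := by
    intro z
    apply (Complex.continuous_ofReal.comp hH).mul
    exact Complex.continuous_exp.comp
      (continuous_const.mul ((continuous_const.sub Complex.continuous_ofReal).pow 2))
  have hcont' : Continuous fun t : ℝ =>
      (H t : ℂ) * (gker c (z₀ - (t : ℂ)) * (-(c:ℂ) * (2 * (z₀ - (t:ℂ))))) := by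
    apply (Complex.continuous_ofReal.comp hH).mul
    apply Continuous.mul
    · exact Complex.continuous_exp.comp
        (continuous_const.mul ((continuous_const.sub Complex.continuous_ofReal).pow 2))
    · exact continuous_const.mul (continuous_const.mul
        (continuous_const.sub Complex.continuous_ofReal))
  have key := hasDerivAt_integral_of_dominated_loc_of_deriv_le
    (F := fun (z : ℂ) (t : ℝ) => (H t : ℂ) * gker c (z - (t : ℂ)))
    (F' := fun (z : ℂ) (t : ℝ) => (H t : ℂ) * (gker c (z - (t : ℂ)) * (-(c:ℂ) * (2 * (z - (t:ℂ))))))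
    (x₀ := z₀) (bound := bound) (μ := MeasureTheory.volume) (Metric.ball_mem_nhds z₀ one_pos)
    (Filter.Eventually.of_forall fun z => (hcont z).aestronglyMeasurable)
    ?hFint hcont'.aestronglyMeasurable ?hbound ?hbi ?hdiff
  · exact key.2
  case hFint =>
    apply Integrable.mono' (((integrable_comp_sub_left
        (fun s => Real.exp (-c * s ^ 2)) z₀.re).mpr (integrable_exp_neg_mul_sq hc)).const_mul
        (M * Real.exp (c * z₀.im ^ 2)))
      (hcont z₀).aestronglyMeasurable
    refine Filter.Eventually.of_forall fun t => ?_
    rw [norm_mul, norm_gker]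
    have h1 : ‖((H t : ℝ) : ℂ)‖ = |H t| := by
      rw [Complex.norm_real, Real.norm_eq_abs]
    rw [h1]
    have h2 : (z₀ - (t:ℂ)).re = z₀.re - t := by simp
    have h3 : (z₀ - (t:ℂ)).im = z₀.im := by simp
    rw [h2, h3]
    have h4 : -c * ((z₀.re - t) ^ 2 - z₀.im ^ 2)
        = c * z₀.im ^ 2 + (-c * (z₀.re - t) ^ 2) := by ring
    rw [h4, Real.exp_add]
    calc |H t| * (Real.exp (c * z₀.im ^ 2) * Real.exp (-c * (z₀.re - t) ^ 2))
        ≤ M * (Real.exp (c * z₀.im ^ 2) * Real.exp (-c * (z₀.re - t) ^ 2)) := by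
          gcongr
          exact hM t
      _ = M * Real.exp (c * z₀.im ^ 2) * Real.exp (-c * (z₀.re - t) ^ 2) := by ring
  case hbi =>
    have heq : bound = fun t =>
        (2 * c * M * Real.exp A) * ((|z₀.re - t| + B) * Real.exp (-(3 * c / 4) * (z₀.re - t) ^ 2)) := by
      funext t
      rw [hbd]
      simp only
      rw [Real.exp_add]
      ring
    rw [heq]
    exact (integrable_gauss_aux (by positivity) B z₀.re (by positivity)).const_mul _
  case hdiff =>
    refine Filter.Eventually.of_forall fun t => fun z _ => ?_
    exact (hasDerivAt_gker c t z).const_mul ((H t : ℝ) : ℂ)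
  case hbound =>
    refine Filter.Eventually.of_forall fun t => fun z hz => ?_
    have hdist : ‖z - z₀‖ ≤ 1 := le_of_lt (by simpa [dist_eq_norm] using hz)
    have hzre : |z.re - z₀.re| ≤ 1 := by
      have := Complex.abs_re_le_norm (z - z₀)
      rw [Complex.sub_re] at this
      calc |z.re - z₀.re| ≤ ‖z - z₀‖ := this
        _ ≤ 1 := hdist
    have hzim : |z.im| ≤ |z₀.im| + 1 := by
      have h1 := Complex.abs_im_le_norm (z - z₀)
      rw [Complex.sub_im] at h1
      have h2 : |z.im| - |z₀.im| ≤ |z.im - z₀.im| := by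
        have := abs_sub_abs_le_abs_sub z.im z₀.im
        linarith
      have h3 : ‖z - z₀‖ = ‖z - z₀‖ := rfl
      linarith
    -- norm of z - t
    have hnz : ‖z - (t:ℂ)‖ ≤ |z₀.re - t| + B := by
      have h1 : ‖z - (t:ℂ)‖ ≤ ‖z - z₀‖ + ‖z₀ - (t:ℂ)‖ := by
        calc ‖z - (t:ℂ)‖ = ‖(z - z₀) + (z₀ - (t:ℂ))‖ := by ring_nf
          _ ≤ ‖z - z₀‖ + ‖z₀ - (t:ℂ)‖ := norm_add_le _ _
      have h2 : ‖z₀ - (t:ℂ)‖ ≤ |z₀.re - t| + |z₀.im| := by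
        have := Complex.norm_le_abs_re_add_abs_im (z₀ - (t:ℂ))
        simpa using this
      rw [hB]
      linarith
    -- exponent inequality
    have hexp : -c * ((z.re - t) ^ 2 - z.im ^ 2) ≤ A + -(3 * c / 4) * (z₀.re - t) ^ 2 := by
      have ha : |z₀.re - t| ^ 2 = (z₀.re - t) ^ 2 := sq_abs _
      have hud : -(|z₀.re - t|) ≤ (z₀.re - t) * (z.re - z₀.re) := by
        have h1 : |(z₀.re - t) * (z.re - z₀.re)| = |z₀.re - t| * |z.re - z₀.re| := abs_mul _ _
        have h2 : |z₀.re - t| * |z.re - z₀.re| ≤ |z₀.re - t| * 1 :=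
          mul_le_mul_of_nonneg_left hzre (abs_nonneg _)
        have h3 := neg_abs_le ((z₀.re - t) * (z.re - z₀.re))
        nlinarith [abs_nonneg (z₀.re - t)]
      have him : z.im ^ 2 ≤ (|z₀.im| + 1) ^ 2 := by
        have h1 : -(|z₀.im| + 1) ≤ z.im := by
          have := abs_le.mp hzim
          linarith [this.1]
        have h2 : z.im ≤ |z₀.im| + 1 := (abs_le.mp hzim).2
        nlinarith
      have hreal : z.im ^ 2 - (z.re - t) ^ 2
          ≤ 4 + (|z₀.im| + 1) ^ 2 - 3 / 4 * (z₀.re - t) ^ 2 := by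
        nlinarith [sq_nonneg (|z₀.re - t| - 4), sq_nonneg (z.re - z₀.re),
          sq_nonneg ((z₀.re - t) + (z.re - z₀.re))]
      have := mul_le_mul_of_nonneg_left hreal hc.le
      rw [hA]
      nlinarith
    -- assemble
    have hre : (z - (t:ℂ)).re = z.re - t := by simp
    have him2 : (z - (t:ℂ)).im = z.im := by simp
    calc ‖(H t : ℂ) * (gker c (z - (t:ℂ)) * (-(c:ℂ) * (2 * (z - (t:ℂ)))))‖
        = |H t| * (Real.exp (-c * ((z.re - t) ^ 2 - z.im ^ 2)) * (c * (2 * ‖z - (t:ℂ)‖))) := by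
          rw [norm_mul, norm_mul, norm_gker, hre, him2, norm_mul, norm_mul, norm_neg]
          simp [Complex.norm_real, Real.norm_eq_abs, abs_of_pos hc]
      _ ≤ M * (Real.exp (A + -(3 * c / 4) * (z₀.re - t) ^ 2) * (c * (2 * (|z₀.re - t| + B)))) := by
          gcongr
          exact hM t
      _ = bound t := by rw [hbd]; ring

lemma gsm_strip_bound (H : ℝ → ℝ) (M c : ℝ) (hc : 0 < c) (hH : Continuous H)
    (hM : ∀ t, |H t| ≤ M) (z : ℂ) (him : |z.im| ≤ 1) :
    ‖gsm H c z‖ ≤ M * Real.exp c * Real.sqrt (Real.pi / c) := by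
  have hM0 : 0 ≤ M := le_trans (abs_nonneg _) (hM 0)
  have hint : Integrable (fun t : ℝ => (M * Real.exp c) * Real.exp (-c * (z.re - t) ^ 2)) := by
    exact ((integrable_comp_sub_left (fun s => Real.exp (-c * s ^ 2)) z.re).mpr
      (integrable_exp_neg_mul_sq hc)).const_mul _
  have hptw : ∀ t : ℝ, ‖(H t : ℂ) * gker c (z - (t:ℂ))‖
      ≤ (M * Real.exp c) * Real.exp (-c * (z.re - t) ^ 2) := by
    intro t
    rw [norm_mul, norm_gker]
    have hre : (z - (t:ℂ)).re = z.re - t := by simp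
    have him2 : (z - (t:ℂ)).im = z.im := by simp
    rw [hre, him2]
    have h1 : ‖((H t : ℝ) : ℂ)‖ = |H t| := by rw [Complex.norm_real, Real.norm_eq_abs]
    rw [h1]
    have h2 : -c * ((z.re - t) ^ 2 - z.im ^ 2) ≤ c + -c * (z.re - t) ^ 2 := by
      have : z.im ^ 2 ≤ 1 := by nlinarith [abs_le.mp him]
      nlinarith
    calc |H t| * Real.exp (-c * ((z.re - t) ^ 2 - z.im ^ 2))
        ≤ M * Real.exp (c + -c * (z.re - t) ^ 2) := by
          gcongr
          exact hM t
      _ = (M * Real.exp c) * Real.exp (-c * (z.re - t) ^ 2) := by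
          rw [Real.exp_add]; ring
  calc ‖gsm H c z‖ ≤ ∫ t : ℝ, (M * Real.exp c) * Real.exp (-c * (z.re - t) ^ 2) :=
        norm_integral_le_of_norm_le hint (Filter.Eventually.of_forall hptw)
    _ = (M * Real.exp c) * ∫ t : ℝ, Real.exp (-c * (z.re - t) ^ 2) := by
        rw [MeasureTheory.integral_const_mul]
    _ = (M * Real.exp c) * ∫ s : ℝ, Real.exp (-c * s ^ 2) := by
        rw [integral_sub_left_eq_self (fun s => Real.exp (-c * s ^ 2)) volume z.re]
    _ = M * Real.exp c * Real.sqrt (Real.pi / c) := by rw [integral_gaussian]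

lemma cauchy_bound (U : ℂ → ℂ) (hU : Differentiable ℂ U) (C : ℝ) (x : ℝ)
    (hC : ∀ z : ℂ, dist z (x:ℂ) ≤ 1 → ‖U z‖ ≤ C) (n : ℕ) :
    ‖iteratedDeriv n U (x:ℂ)‖ ≤ n.factorial * C := by
  have hC0 : 0 ≤ C := le_trans (norm_nonneg _) (hC (x:ℂ) (by simp))
  have hps := hU.hasFPowerSeriesOnBall (x:ℂ) (R := 1) one_pos
  have h2 := hps.factorial_smul (1 : ℂ) n
  have h1 : iteratedDeriv n U (x:ℂ) = iteratedFDeriv ℂ n U (x:ℂ) (fun _ => 1) :=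
    iteratedDeriv_eq_iteratedFDeriv
  rw [h1, ← h2]
  simp only [NNReal.coe_one]
  have h3 : ‖(n.factorial : ℕ) • cauchyPowerSeries U (x:ℂ) 1 n (fun _ => (1:ℂ))‖
      = (n.factorial : ℝ) * ‖cauchyPowerSeries U (x:ℂ) 1 n (fun _ => (1:ℂ))‖ := by
    rw [← Nat.cast_smul_eq_nsmul ℝ, norm_smul, Real.norm_natCast]
  rw [h3]
  gcongr
  have h4 : ‖cauchyPowerSeries U (x:ℂ) 1 n (fun _ => (1:ℂ))‖
      ≤ ‖cauchyPowerSeries U (x:ℂ) 1 n‖ := by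
    have := (cauchyPowerSeries U (x:ℂ) 1 n).le_opNorm (fun _ => (1:ℂ))
    simpa using this
  have h5 := norm_cauchyPowerSeries_le U (x:ℂ) 1 n
  have h6 : ∫ θ : ℝ in (0)..(2 * Real.pi), ‖U (circleMap (x:ℂ) 1 θ)‖
      ≤ ∫ _ : ℝ in (0)..(2 * Real.pi), C := by
    apply intervalIntegral.integral_mono_on Real.two_pi_pos.le
    · exact ((hU.continuous.comp (continuous_circleMap _ _)).norm).intervalIntegrable _ _
    · exact intervalIntegrable_const
    · intro θ _
      apply hC
      have := circleMap_mem_sphere (x:ℂ) (zero_le_one) θ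
      simpa [Metric.mem_sphere] using this.le
  have h7 : (∫ _ : ℝ in (0)..(2 * Real.pi), C) = 2 * Real.pi * C := by simp [mul_comm]
  calc ‖cauchyPowerSeries U (x:ℂ) 1 n (fun _ => (1:ℂ))‖
      ≤ ‖cauchyPowerSeries U (x:ℂ) 1 n‖ := h4
    _ ≤ ((2 * Real.pi)⁻¹ * ∫ θ : ℝ in (0)..(2 * Real.pi), ‖U (circleMap (x:ℂ) 1 θ)‖)
        * |(1:ℝ)|⁻¹ ^ n := h5
    _ ≤ C := by
        rw [abs_one, inv_one, one_pow, mul_one]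
        rw [h7] at h6
        calc (2 * Real.pi)⁻¹ * ∫ θ : ℝ in (0)..(2 * Real.pi), ‖U (circleMap (x:ℂ) 1 θ)‖
            ≤ (2 * Real.pi)⁻¹ * (2 * Real.pi * C) := by
              gcongr
            _ = C := by field_simp

lemma gsm_real (H : ℝ → ℝ) (c : ℝ) (x : ℝ) :
    gsm H c (x:ℂ) = ((∫ t : ℝ, H t * Real.exp (-c * (x - t) ^ 2) : ℝ) : ℂ) := by
  rw [gsm]
  rw [show ((∫ t : ℝ, H t * Real.exp (-c * (x - t) ^ 2) : ℝ) : ℂ)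
      = ∫ t : ℝ, ((H t * Real.exp (-c * (x - t) ^ 2) : ℝ) : ℂ) from (integral_ofReal).symm]
  congr 1
  funext t
  rw [gker]
  push_cast
  ring_nf

lemma iteratedDeriv_restrict (U : ℂ → ℂ) (hU : Differentiable ℂ U) (n : ℕ) :
    ∀ x : ℝ, iteratedDeriv n (fun x : ℝ => (U (x:ℂ)).re) x = (iteratedDeriv n U (x:ℂ)).re := by
  have hA : AnalyticOnNhd ℂ U Set.univ := (Complex.analyticOnNhd_univ_iff_differentiable).mpr hU
  have hCd : ContDiff ℂ ⊤ U := hA.contDiff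
  have hdn : ∀ m : ℕ, Differentiable ℂ (iteratedDeriv m U) := by
    intro m
    exact hCd.differentiable_iteratedDeriv m (by
      exact lt_top_iff_ne_top.mpr (by simp))
  induction n with
  | zero => intro x; simp
  | succ n ih =>
    intro x
    rw [iteratedDeriv_succ, iteratedDeriv_succ]
    have heq : iteratedDeriv n (fun x : ℝ => (U (x:ℂ)).re)
        = fun x : ℝ => (iteratedDeriv n U (x:ℂ)).re := funext ih
    rw [heq]
    exact (((hdn n) (x:ℂ)).hasDerivAt.real_of_complex).deriv

lemma gsm_approx (H : ℝ → ℝ) (M c δ η : ℝ) (hc : 0 < c) (hδ : 0 < δ) (hη : 0 < η)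
    (hH : Continuous H) (hM : ∀ t, |H t| ≤ M)
    (hUC : ∀ s t : ℝ, |s - t| ≤ δ → |H s - H t| ≤ η / 2)
    (htail : 2 * M * Real.exp (-(c * δ ^ 2 / 2)) * Real.sqrt (Real.pi / (c / 2))
      ≤ (η / 2) * Real.sqrt (Real.pi / c))
    (x : ℝ) :
    |(∫ t : ℝ, H t * Real.exp (-c * (x - t) ^ 2)) / Real.sqrt (Real.pi / c) - H x| ≤ η := by
  have hM0 : 0 ≤ M := le_trans (abs_nonneg _) (hM 0)
  set Z : ℝ := Real.sqrt (Real.pi / c) with hZ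
  have hZpos : 0 < Z := Real.sqrt_pos.mpr (by positivity)
  have hcont1 : Continuous fun t : ℝ => H t * Real.exp (-c * (x - t) ^ 2) := by
    apply hH.mul
    apply Real.continuous_exp.comp
    continuity
  have hint1 : Integrable (fun t : ℝ => H t * Real.exp (-c * (x - t) ^ 2)) := by
    apply Integrable.mono' (((integrable_comp_sub_left (fun s => Real.exp (-c * s ^ 2)) x).mpr
      (integrable_exp_neg_mul_sq hc)).const_mul M) hcont1.aestronglyMeasurable
    refine Filter.Eventually.of_forall fun t => ?_
    rw [Real.norm_eq_abs, abs_mul, abs_of_pos (Real.exp_pos _)]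
    exact mul_le_mul_of_nonneg_right (hM t) (Real.exp_pos _).le
  have hgauss : (∫ t : ℝ, Real.exp (-c * (x - t) ^ 2)) = Z := by
    rw [integral_sub_left_eq_self (fun s => Real.exp (-c * s ^ 2)) volume x, integral_gaussian]
  have hnum : (∫ t : ℝ, H t * Real.exp (-c * (x - t) ^ 2)) - H x * Z
      = ∫ t : ℝ, (H t - H x) * Real.exp (-c * (x - t) ^ 2) := by
    rw [← hgauss, ← MeasureTheory.integral_const_mul, ← integral_sub hint1]
    · congr 1; funext t; ring
    · exact ((integrable_comp_sub_left (fun s => Real.exp (-c * s ^ 2)) x).mpr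
        (integrable_exp_neg_mul_sq hc)).const_mul (H x)
  have hintRHS : Integrable (fun t : ℝ => (η / 2) * Real.exp (-c * (x - t) ^ 2)
      + 2 * M * Real.exp (-(c * δ ^ 2 / 2)) * Real.exp (-(c / 2) * (x - t) ^ 2)) := by
    apply Integrable.add
    · exact ((integrable_comp_sub_left (fun s => Real.exp (-c * s ^ 2)) x).mpr
        (integrable_exp_neg_mul_sq hc)).const_mul _
    · exact ((integrable_comp_sub_left (fun s => Real.exp (-(c/2) * s ^ 2)) x).mpr
        (integrable_exp_neg_mul_sq (by positivity))).const_mul _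
  have hptw : ∀ t : ℝ, ‖(H t - H x) * Real.exp (-c * (x - t) ^ 2)‖
      ≤ (η / 2) * Real.exp (-c * (x - t) ^ 2)
        + 2 * M * Real.exp (-(c * δ ^ 2 / 2)) * Real.exp (-(c / 2) * (x - t) ^ 2) := by
    intro t
    rw [Real.norm_eq_abs, abs_mul, abs_of_pos (Real.exp_pos _)]
    rcases le_or_gt |x - t| δ with hle | hgt
    · have h1 : |H t - H x| ≤ η / 2 := by
        have := hUC t x (by rw [abs_sub_comm]; exact hle)
        exact this
      have h2 : |H t - H x| * Real.exp (-c * (x - t) ^ 2)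
          ≤ (η / 2) * Real.exp (-c * (x - t) ^ 2) :=
        mul_le_mul_of_nonneg_right h1 (Real.exp_pos _).le
      have h3 : 0 ≤ 2 * M * Real.exp (-(c * δ ^ 2 / 2)) * Real.exp (-(c / 2) * (x - t) ^ 2) := by
        positivity
      linarith
    · have h1 : |H t - H x| ≤ 2 * M := by
        calc |H t - H x| ≤ |H t| + |H x| := abs_sub _ _
          _ ≤ M + M := add_le_add (hM t) (hM x)
          _ = 2 * M := by ring
      have h2 : Real.exp (-c * (x - t) ^ 2)
          ≤ Real.exp (-(c * δ ^ 2 / 2)) * Real.exp (-(c / 2) * (x - t) ^ 2) := by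
        rw [← Real.exp_add]
        apply Real.exp_le_exp.mpr
        have : δ ^ 2 ≤ (x - t) ^ 2 := by nlinarith [abs_nonneg (x - t), sq_abs (x - t), hgt]
        nlinarith
      have h3 : |H t - H x| * Real.exp (-c * (x - t) ^ 2)
          ≤ 2 * M * (Real.exp (-(c * δ ^ 2 / 2)) * Real.exp (-(c / 2) * (x - t) ^ 2)) := by
        apply mul_le_mul h1 h2 (Real.exp_pos _).le (by positivity)
      have h4 : 0 ≤ (η / 2) * Real.exp (-c * (x - t) ^ 2) := by positivity
      nlinarith
  have hbound : |(∫ t : ℝ, H t * Real.exp (-c * (x - t) ^ 2)) - H x * Z| ≤ η * Z := by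
    rw [hnum]
    have h5 : ‖∫ t : ℝ, (H t - H x) * Real.exp (-c * (x - t) ^ 2)‖
        ≤ ∫ t : ℝ, ((η / 2) * Real.exp (-c * (x - t) ^ 2)
          + 2 * M * Real.exp (-(c * δ ^ 2 / 2)) * Real.exp (-(c / 2) * (x - t) ^ 2)) :=
      norm_integral_le_of_norm_le hintRHS (Filter.Eventually.of_forall hptw)
    rw [Real.norm_eq_abs] at h5
    have h6 : (∫ t : ℝ, ((η / 2) * Real.exp (-c * (x - t) ^ 2)
          + 2 * M * Real.exp (-(c * δ ^ 2 / 2)) * Real.exp (-(c / 2) * (x - t) ^ 2)))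
        = (η / 2) * Z + 2 * M * Real.exp (-(c * δ ^ 2 / 2)) * Real.sqrt (Real.pi / (c / 2)) := by
      rw [MeasureTheory.integral_add
        (((integrable_comp_sub_left (fun s => Real.exp (-c * s ^ 2)) x).mpr
          (integrable_exp_neg_mul_sq hc)).const_mul _)
        (((integrable_comp_sub_left (fun s => Real.exp (-(c/2) * s ^ 2)) x).mpr
          (integrable_exp_neg_mul_sq (by positivity))).const_mul _),
        MeasureTheory.integral_const_mul, MeasureTheory.integral_const_mul, hgauss,
        integral_sub_left_eq_self (fun s => Real.exp (-(c/2) * s ^ 2)) volume x]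
      have : (∫ s : ℝ, Real.exp (-(c/2) * s ^ 2)) = Real.sqrt (Real.pi / (c / 2)) :=
        integral_gaussian (c/2)
      rw [this]
    rw [h6] at h5
    calc |∫ t : ℝ, (H t - H x) * Real.exp (-c * (x - t) ^ 2)|
        ≤ (η / 2) * Z + 2 * M * Real.exp (-(c * δ ^ 2 / 2)) * Real.sqrt (Real.pi / (c / 2)) := h5
      _ ≤ (η / 2) * Z + (η / 2) * Z := by linarith [htail]
      _ = η * Z := by ring
  rw [div_sub' (ne_of_gt hZpos), abs_div, abs_of_pos hZpos, div_le_iff₀ hZpos,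
    mul_comm Z (H x)]
  exact hbound

lemma analytic_approx (H : ℝ → ℝ) (M : ℝ) (hM : ∀ t, |H t| ≤ M) (hH : UniformContinuous H)
    (η : ℝ) (hη : 0 < η) :
    ∃ Φ : ℝ → ℝ, ContDiff ℝ (⊤ : ℕ∞) Φ ∧ (∀ n : ℕ, ∃ C : ℝ, ∀ x : ℝ, |iteratedDeriv n Φ x| ≤ C) ∧
      UniformContinuous Φ ∧ ∀ x, |Φ x - H x| ≤ η := by
  have hM0 : 0 ≤ M := le_trans (abs_nonneg _) (hM 0)
  have hHc : Continuous H := hH.continuous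
  obtain ⟨δ₀, hδ₀, hUCδ⟩ := Metric.uniformContinuous_iff.mp hH (η/2) (by positivity)
  set δ : ℝ := δ₀ / 2 with hδdef
  have hδ : 0 < δ := by positivity
  have hUC : ∀ s t : ℝ, |s - t| ≤ δ → |H s - H t| ≤ η / 2 := by
    intro s t h
    have hd : dist s t < δ₀ := by rw [Real.dist_eq]; rw [hδdef] at h; linarith
    exact (hUCδ hd).le
  set c : ℝ := 1 + 16 * M / (η * δ ^ 2) with hcdef
  have hc : 0 < c := by positivity
  have hsqrt2 : Real.sqrt (Real.pi / (c/2)) = Real.sqrt 2 * Real.sqrt (Real.pi / c) := by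
    rw [← Real.sqrt_mul (by norm_num : (0:ℝ) ≤ 2)]
    congr 1
    field_simp
  have hZpos : (0:ℝ) < Real.sqrt (Real.pi / c) := Real.sqrt_pos.mpr (by positivity)
  have htail : 2 * M * Real.exp (-(c * δ ^ 2 / 2)) * Real.sqrt (Real.pi / (c / 2))
      ≤ (η / 2) * Real.sqrt (Real.pi / c) := by
    rw [hsqrt2]
    rw [show 2 * M * Real.exp (-(c * δ ^ 2 / 2)) * (Real.sqrt 2 * Real.sqrt (Real.pi / c))
        = (2 * M * Real.exp (-(c * δ ^ 2 / 2)) * Real.sqrt 2) * Real.sqrt (Real.pi / c) from by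
        ring]
    apply mul_le_mul_of_nonneg_right _ hZpos.le
    have hx : (0:ℝ) < c * δ ^ 2 / 2 := by positivity
    have hexp : Real.exp (-(c * δ ^ 2 / 2)) ≤ 2 / (c * δ ^ 2) := by
      rw [Real.exp_neg]
      have h1 : c * δ ^ 2 / 2 ≤ Real.exp (c * δ ^ 2 / 2) := by
        linarith [Real.add_one_le_exp (c * δ ^ 2 / 2)]
      have h2 : (Real.exp (c * δ ^ 2 / 2))⁻¹ ≤ (c * δ ^ 2 / 2)⁻¹ :=
        inv_anti₀ hx h1
      have h3 : (c * δ ^ 2 / 2)⁻¹ = 2 / (c * δ ^ 2) := by field_simp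
      linarith [h3 ▸ h2]
    have hs2 : Real.sqrt 2 ≤ 2 := by
      nlinarith [Real.sqrt_nonneg 2, Real.sq_sqrt (show (0:ℝ) ≤ 2 by norm_num)]
    have h8 : 16 * M ≤ c * (η * δ ^ 2) := by
      have he : c * (η * δ ^ 2) = η * δ ^ 2 + 16 * M := by
        rw [hcdef]; field_simp
      nlinarith [hη, hδ]
    calc 2 * M * Real.exp (-(c * δ ^ 2 / 2)) * Real.sqrt 2
        ≤ 2 * M * (2 / (c * δ ^ 2)) * 2 := by
          apply mul_le_mul _ hs2 (Real.sqrt_nonneg 2) (by positivity)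
          exact mul_le_mul_of_nonneg_left hexp (by positivity)
      _ = 8 * M / (c * δ ^ 2) := by ring
      _ ≤ η / 2 := by
          rw [div_le_iff₀ (by positivity)]
          clear_value c
          clear_value δ
          nlinarith [h8]
  set Z : ℝ := Real.sqrt (Real.pi / c) with hZ
  set Φ : ℝ → ℝ := fun x => (∫ t : ℝ, H t * Real.exp (-c * (x - t) ^ 2)) / Z with hΦdef
  have hU : Differentiable ℂ (gsm H c) :=
    fun z => (gsm_hasDerivAt H M c hc hHc hM z).differentiableAt
  have hre : ∀ x : ℝ, (gsm H c (x:ℂ)).re = ∫ t : ℝ, H t * Real.exp (-c * (x - t) ^ 2) := by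
    intro x; rw [gsm_real]; exact Complex.ofReal_re _
  have hΦeq : Φ = Z⁻¹ • (fun y : ℝ => (gsm H c (y:ℂ)).re) := by
    funext x
    rw [hΦdef]
    simp only [Pi.smul_apply, smul_eq_mul]
    rw [hre, div_eq_inv_mul]
  have hA : AnalyticOnNhd ℂ (gsm H c) Set.univ :=
    (Complex.analyticOnNhd_univ_iff_differentiable).mpr hU
  have hA2 : AnalyticOnNhd ℝ (fun x : ℝ => gsm H c (x:ℂ)) Set.univ := by
    apply AnalyticOnNhd.comp (hA.restrictScalars) (Complex.ofRealCLM.analyticOnNhd Set.univ)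
    exact Set.mapsTo_univ _ _
  have hA3 : AnalyticOnNhd ℝ (fun x : ℝ => (gsm H c (x:ℂ)).re) Set.univ :=
    Complex.reCLM.comp_analyticOnNhd hA2
  have hA4 : AnalyticOnNhd ℝ Φ Set.univ := by
    have h := (analyticOnNhd_const : AnalyticOnNhd ℝ (fun _ : ℝ => Z⁻¹) Set.univ).mul hA3
    have heq2 : Φ = fun x : ℝ => Z⁻¹ * (gsm H c (x:ℂ)).re := by
      funext x
      show (∫ t : ℝ, H t * Real.exp (-c * (x - t) ^ 2)) / Z = Z⁻¹ * (gsm H c (x:ℂ)).re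
      rw [hre, div_eq_inv_mul]
    rw [heq2]
    exact h
  have hsmooth : ContDiff ℝ (⊤ : ℕ∞) Φ := hA4.contDiff
  -- strip bound hypothesis for cauchy_bound
  have hCbd : ∀ x : ℝ, ∀ z : ℂ, dist z (x:ℂ) ≤ 1 →
      ‖gsm H c z‖ ≤ M * Real.exp c * Real.sqrt (Real.pi / c) := by
    intro x z hz
    apply gsm_strip_bound H M c hc hHc hM
    have h1 : z.im = (z - (x:ℂ)).im := by simp
    rw [h1]
    calc |(z - (x:ℂ)).im| ≤ ‖z - (x:ℂ)‖ := Complex.abs_im_le_norm _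
      _ = dist z (x:ℂ) := by rw [Complex.dist_eq]
      _ ≤ 1 := hz
  have hrestrict := iteratedDeriv_restrict (gsm H c) hU
  have hbd : ∀ n : ℕ, ∃ C : ℝ, ∀ x : ℝ, |iteratedDeriv n Φ x| ≤ C := by
    intro n
    refine ⟨Z⁻¹ * (n.factorial * (M * Real.exp c * Real.sqrt (Real.pi / c))), fun x => ?_⟩
    have h1 : iteratedDeriv n Φ x
        = Z⁻¹ * iteratedDeriv n (fun y : ℝ => (gsm H c (y:ℂ)).re) x := by
      rw [hΦeq, iteratedDeriv_eq_iteratedFDeriv, iteratedDeriv_eq_iteratedFDeriv]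
      rw [iteratedFDeriv_const_smul_apply (hA3.contDiff.of_le le_top).contDiffAt]
      simp
    rw [h1, abs_mul, abs_of_nonneg (inv_nonneg.mpr hZpos.le)]
    apply mul_le_mul_of_nonneg_left _ (inv_nonneg.mpr hZpos.le)
    rw [hrestrict n x]
    calc |(iteratedDeriv n (gsm H c) (x:ℂ)).re| ≤ ‖iteratedDeriv n (gsm H c) (x:ℂ)‖ := by
          exact Complex.abs_re_le_norm _
      _ ≤ n.factorial * (M * Real.exp c * Real.sqrt (Real.pi / c)) :=
          cauchy_bound (gsm H c) hU _ x (hCbd x) n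
  have hdiffΦ : Differentiable ℝ Φ := hsmooth.differentiable (by simp)
  obtain ⟨C₁, hC₁⟩ := hbd 1
  have hlip : LipschitzWith (Real.toNNReal C₁) Φ := by
    apply lipschitzWith_of_nnnorm_deriv_le hdiffΦ
    intro x
    rw [← NNReal.coe_le_coe, coe_nnnorm, Real.coe_toNNReal']
    have h2 := hC₁ x
    rw [iteratedDeriv_one] at h2
    exact le_max_of_le_left (by rwa [Real.norm_eq_abs])
  exact ⟨Φ, hsmooth, hbd, hlip.uniformContinuous,
    fun x => gsm_approx H M c δ η hc hδ hη hHc hM hUC htail x⟩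

open Set Pointwise

/-- The generalized strip `T^{F,G}`. -/
def genStrip (F G : ℝ → ℝ) : Set ℂ := {z : ℂ | -G z.re < z.im ∧ z.im < F z.re}

/-- Membership in the family `𝓕(ℝ)`: uniformly continuous, bounded below by a
positive constant and bounded above. -/
def memF (F : ℝ → ℝ) : Prop :=
  UniformContinuous F ∧ (∃ m > (0:ℝ), ∀ t, m ≤ F t) ∧ (∃ M : ℝ, ∀ t, F t ≤ M)

lemma closure_genStrip (F G : ℝ → ℝ) (hF : Continuous F) (hG : Continuous G) :
    closure (genStrip F G) ⊆ {z : ℂ | -G z.re ≤ z.im ∧ z.im ≤ F z.re} := by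
  apply closure_minimal
  · intro z hz
    exact ⟨hz.1.le, hz.2.le⟩
  · have : {z : ℂ | -G z.re ≤ z.im ∧ z.im ≤ F z.re}
        = {z : ℂ | -G z.re ≤ z.im} ∩ {z : ℂ | z.im ≤ F z.re} := rfl
    rw [this]
    apply IsClosed.inter
    · exact isClosed_le ((hG.comp Complex.continuous_re).neg) Complex.continuous_im
    · exact isClosed_le Complex.continuous_im (hF.comp Complex.continuous_re)

lemma key_ineq (F Φ : ℝ → ℝ) (a m η ε : ℝ) (hm : ∀ t, m ≤ F t) (ha0 : 0 < a) (ha1 : a < 1)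
    (hηdef : η = (1 - a) * m / 8) (hm0 : 0 < m)
    (hap : ∀ x, |Φ x - (1 + a) / 2 * F x| ≤ η)
    (hεη : ε ≤ η) (hε0 : 0 < ε)
    (hFuc : ∀ s t : ℝ, |s - t| ≤ ε → |F s - F t| ≤ η) :
    ∀ s t : ℝ, |s - t| ≤ ε → a * F s + ε < Φ t ∧ Φ s + ε < F t := by
  intro s t hst
  have hηpos : 0 < η := by rw [hηdef]; have : 0 < 1 - a := by linarith
                           positivity
  have h1 := abs_le.mp (hap t)
  have h2 := abs_le.mp (hap s)
  have h3 := abs_le.mp (hFuc s t hst)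
  have h4 := hm s
  have h5 := hm t
  have hp1 : (1 + a) / 2 * (F s - η) ≤ (1 + a) / 2 * F t := by
    apply mul_le_mul_of_nonneg_left _ (by linarith)
    linarith
  have hp2 : (1 - a) / 2 * m ≤ (1 - a) / 2 * F s := by
    apply mul_le_mul_of_nonneg_left h4 (by linarith)
  have hp3 : (1 + a) / 2 * η ≤ η := by
    nlinarith
  have hp4 : (1 + a) / 2 * F s ≤ (1 + a) / 2 * (F t + η) := by
    apply mul_le_mul_of_nonneg_left _ (by linarith)
    linarith
  have hp5 : (1 - a) / 2 * m ≤ (1 - a) / 2 * F t := by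
    apply mul_le_mul_of_nonneg_left h5 (by linarith)
  constructor
  · nlinarith
  · nlinarith

theorem stmt_1 (F G : ℝ → ℝ) (hF : memF F) (hG : memF G) (a : ℝ)
    (ha : a ∈ Set.Ioo (0:ℝ) 1) :
    ∃ ε > (0:ℝ), ∃ Φ Ψ : ℝ → ℝ, memF Φ ∧ memF Ψ ∧
      ContDiff ℝ (⊤ : ℕ∞) Φ ∧ ContDiff ℝ (⊤ : ℕ∞) Ψ ∧
      (∀ n : ℕ, ∃ C : ℝ, ∀ x : ℝ, |iteratedDeriv n Φ x| ≤ C) ∧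
      (∀ n : ℕ, ∃ C : ℝ, ∀ x : ℝ, |iteratedDeriv n Ψ x| ≤ C) ∧
      (closure (genStrip (fun t => a * F t) (fun t => a * G t)) + Metric.closedBall 0 ε
        ⊆ genStrip Φ Ψ) ∧
      (closure (genStrip Φ Ψ) + Metric.closedBall 0 ε ⊆ genStrip F G) := by
  obtain ⟨hFuc, ⟨mF, hmF, hmFle⟩, ⟨MF, hMFle⟩⟩ := hF
  obtain ⟨hGuc, ⟨mG, hmG, hmGle⟩, ⟨MG, hMGle⟩⟩ := hG
  obtain ⟨ha0, ha1⟩ := ha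
  have hm0 : 0 < min mF mG := lt_min hmF hmG
  set m : ℝ := min mF mG with hmdef
  have hmFle' : ∀ t, m ≤ F t := fun t => le_trans (min_le_left _ _) (hmFle t)
  have hmGle' : ∀ t, m ≤ G t := fun t => le_trans (min_le_right _ _) (hmGle t)
  set η : ℝ := (1 - a) * m / 8 with hηdef
  have h1a : (0:ℝ) < 1 - a := by linarith
  have hηpos : 0 < η := by rw [hηdef]; positivity
  have hMF0 : 0 < MF := lt_of_lt_of_le hmF (le_trans (hmFle 0) (hMFle 0))
  have hMG0 : 0 < MG := lt_of_lt_of_le hmG (le_trans (hmGle 0) (hMGle 0))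
  -- smooth approximants
  have hcoef : (0:ℝ) < (1 + a) / 2 := by linarith
  have hFuc2 : UniformContinuous fun t => (1 + a) / 2 * F t := by
    exact hFuc.const_smul ((1 + a) / 2)
  have hGuc2 : UniformContinuous fun t => (1 + a) / 2 * G t := by
    exact hGuc.const_smul ((1 + a) / 2)
  obtain ⟨Φ, hΦsm, hΦbd, hΦuc, hΦap⟩ :=
    analytic_approx (fun t => (1 + a) / 2 * F t) ((1 + a) / 2 * MF)
      (fun t => by
        rw [abs_mul, abs_of_pos hcoef, abs_of_pos (lt_of_lt_of_le hm0 (hmFle' t))]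
        exact mul_le_mul_of_nonneg_left (hMFle t) hcoef.le)
      hFuc2 η hηpos
  obtain ⟨Ψ, hΨsm, hΨbd, hΨuc, hΨap⟩ :=
    analytic_approx (fun t => (1 + a) / 2 * G t) ((1 + a) / 2 * MG)
      (fun t => by
        rw [abs_mul, abs_of_pos hcoef, abs_of_pos (lt_of_lt_of_le hm0 (hmGle' t))]
        exact mul_le_mul_of_nonneg_left (hMGle t) hcoef.le)
      hGuc2 η hηpos
  -- uniform continuity moduli
  obtain ⟨δF, hδF, hFmod⟩ := Metric.uniformContinuous_iff.mp hFuc η hηpos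
  obtain ⟨δG, hδG, hGmod⟩ := Metric.uniformContinuous_iff.mp hGuc η hηpos
  set ε : ℝ := min (min (δF / 2) (δG / 2)) η with hεdef
  have hε0 : 0 < ε := lt_min (lt_min (by positivity) (by positivity)) hηpos
  have hεη : ε ≤ η := min_le_right _ _
  have hFprop : ∀ s t : ℝ, |s - t| ≤ ε → |F s - F t| ≤ η := by
    intro s t h
    have : dist s t < δF := by
      rw [Real.dist_eq]
      have h1 : ε ≤ δF / 2 := le_trans (min_le_left _ _) (min_le_left _ _)
      linarith
    exact (hFmod this).le
  have hGprop : ∀ s t : ℝ, |s - t| ≤ ε → |G s - G t| ≤ η := by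
    intro s t h
    have : dist s t < δG := by
      rw [Real.dist_eq]
      have h1 : ε ≤ δG / 2 := le_trans (min_le_left _ _) (min_le_right _ _)
      linarith
    exact (hGmod this).le
  have keyF := key_ineq F Φ a m η ε hmFle' ha0 ha1 hηdef hm0 hΦap hεη hε0 hFprop
  have keyG := key_ineq G Ψ a m η ε hmGle' ha0 ha1 hηdef hm0 hΨap hεη hε0 hGprop
  -- memF for Φ
  have hmemΦ : memF Φ := by
    refine ⟨hΦuc, ⟨m / 4, by positivity, fun t => ?_⟩, ⟨(1 + a) / 2 * MF + η, fun t => ?_⟩⟩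
    · have h1 := abs_le.mp (hΦap t)
      have h2 := hmFle' t
      have h3 : (1 - a) / 2 * m ≤ (1 - a) / 2 * F t := by
        apply mul_le_mul_of_nonneg_left h2 (by linarith)
      have h4 : a * m ≤ a * F t := mul_le_mul_of_nonneg_left h2 ha0.le
      nlinarith
    · have h1 := abs_le.mp (hΦap t)
      have h2 : (1 + a) / 2 * F t ≤ (1 + a) / 2 * MF :=
        mul_le_mul_of_nonneg_left (hMFle t) hcoef.le
      linarith
  have hmemΨ : memF Ψ := by
    refine ⟨hΨuc, ⟨m / 4, by positivity, fun t => ?_⟩, ⟨(1 + a) / 2 * MG + η, fun t => ?_⟩⟩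
    · have h1 := abs_le.mp (hΨap t)
      have h2 := hmGle' t
      have h3 : (1 - a) / 2 * m ≤ (1 - a) / 2 * G t := by
        apply mul_le_mul_of_nonneg_left h2 (by linarith)
      have h4 : a * m ≤ a * G t := mul_le_mul_of_nonneg_left h2 ha0.le
      nlinarith
    · have h1 := abs_le.mp (hΨap t)
      have h2 : (1 + a) / 2 * G t ≤ (1 + a) / 2 * MG :=
        mul_le_mul_of_nonneg_left (hMGle t) hcoef.le
      linarith
  refine ⟨ε, hε0, Φ, Ψ, hmemΦ, hmemΨ, hΦsm, hΨsm, hΦbd, hΨbd, ?_, ?_⟩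
  · -- first inclusion
    intro z hz
    rw [Set.mem_add] at hz
    obtain ⟨w, hw, b, hb, rfl⟩ := hz
    have hwcl := closure_genStrip (fun t => a * F t) (fun t => a * G t)
      (continuous_const.mul hFuc.continuous) (continuous_const.mul hGuc.continuous) hw
    obtain ⟨hw1, hw2⟩ := hwcl
    rw [Metric.mem_closedBall, dist_zero_right] at hb
    have hbnorm : ‖b‖ ≤ ε := hb
    have hbre : |b.re| ≤ ε := (Complex.abs_re_le_norm b).trans hbnorm
    have hbim : |b.im| ≤ ε := (Complex.abs_im_le_norm b).trans hbnorm
    have hstw : |w.re - (w + b).re| ≤ ε := by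
      rw [Complex.add_re, show w.re - (w.re + b.re) = -b.re from by ring, abs_neg]
      exact hbre
    obtain ⟨k1, _⟩ := keyF w.re ((w + b).re) hstw
    obtain ⟨k1g, _⟩ := keyG w.re ((w + b).re) hstw
    have hw1' : -(a * G w.re) ≤ w.im := hw1
    have hw2' : w.im ≤ a * F w.re := hw2
    have hb1 := abs_le.mp hbim
    refine ⟨?_, ?_⟩
    · show -Ψ ((w + b).re) < (w + b).im
      rw [Complex.add_im]
      linarith [hb1.1]
    · show (w + b).im < Φ ((w + b).re)
      rw [Complex.add_im]
      linarith [hb1.2]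
  · -- second inclusion
    intro z hz
    rw [Set.mem_add] at hz
    obtain ⟨w, hw, b, hb, rfl⟩ := hz
    have hwcl := closure_genStrip Φ Ψ hΦsm.continuous hΨsm.continuous hw
    obtain ⟨hw1, hw2⟩ := hwcl
    rw [Metric.mem_closedBall, dist_zero_right] at hb
    have hbnorm : ‖b‖ ≤ ε := hb
    have hbre : |b.re| ≤ ε := (Complex.abs_re_le_norm b).trans hbnorm
    have hbim : |b.im| ≤ ε := (Complex.abs_im_le_norm b).trans hbnorm
    have hstw : |w.re - (w + b).re| ≤ ε := by
      rw [Complex.add_re, show w.re - (w.re + b.re) = -b.re from by ring, abs_neg]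
      exact hbre
    obtain ⟨_, k2⟩ := keyF w.re ((w + b).re) hstw
    obtain ⟨_, k2g⟩ := keyG w.re ((w + b).re) hstw
    have hb1 := abs_le.mp hbim
    refine ⟨?_, ?_⟩
    · show -G ((w + b).re) < (w + b).im
      rw [Complex.add_im]
      linarith [hb1.1]
    · show (w + b).im < F ((w + b).re)
      rw [Complex.add_im]
      linarith [hb1.2]
end

section
/- Let w : [0,∞) → [0,∞) be a non-decreasing unbounded function such that there exist C > 0 and A > 1 with 2w(t) ≤ w(Ct) + log A for all t ≥ 0. Then there exists C' > 1 such that ∫₀^∞ e^{w(t) - w(C't)} dt < ∞. -/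
/-! Comparing `w(Ct)` with `w(t)` shows `C > 1`, and `2 w(t) ≤ w(Ct) + log A` says directly
`w(t) - w(Ct) ≤ log A - w(t)`, so `C' = C` works once `e^{-w}` is integrable. Iterating the
doubling inequality along the geometric sequence `C^n t₁` yields the polynomial lower bound
`w(t) ≥ b t^α - K` with `α = log_C 2`, and `e^{-b t^α}` is integrable on `(0, ∞)`. -/

open Real MeasureTheory Set

theorem integrableOn_exp_neg_mul_rpow {p b : ℝ} (hp : 0 < p) (hb : 0 < b) :
    IntegrableOn (fun x : ℝ => exp (-b * x ^ p)) (Ioi 0) :=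
  (integrableOn_rpow_mul_exp_neg_mul_rpow (s := 0) (by norm_num) hp hb).congr_fun
    (fun x _ => by simp) measurableSet_Ioi

theorem two_pow_mul_le_of_two_mul_le {v : ℝ → ℝ} {C : ℝ} (hC : 0 ≤ C)
    (hv : ∀ t ≥ (0:ℝ), 2 * v t ≤ v (C * t)) (n : ℕ) {t : ℝ} (ht : 0 ≤ t) :
    2 ^ n * v t ≤ v (C ^ n * t) := by
  induction n with
  | zero => simp
  | succ n ih =>
    calc 2 ^ (n + 1) * v t = 2 * (2 ^ n * v t) := by ring
      _ ≤ 2 * v (C ^ n * t) := by linarith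
      _ ≤ v (C * (C ^ n * t)) := hv _ (by positivity)
      _ = v (C ^ (n + 1) * t) := by ring_nf

theorem rpow_logb_le_of_two_mul_le {v : ℝ → ℝ} {C : ℝ} (hmono : MonotoneOn v (Ici 0))
    (hC : 1 < C) (hv : ∀ t ≥ (0:ℝ), 2 * v t ≤ v (C * t)) {t₁ : ℝ} (ht₁ : 0 < t₁)
    (hvt₁ : 1 ≤ v t₁) {t : ℝ} (ht : t₁ ≤ t) :
    (t / t₁) ^ logb C 2 ≤ 2 * v t := by
  have hα : 0 < logb C 2 := logb_pos hC one_lt_two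
  obtain ⟨n, hlow, hup⟩ := exists_nat_pow_near ((one_le_div ht₁).2 ht) hC
  have hCn : C ^ n * t₁ ≤ t := (le_div_iff₀ ht₁).1 hlow
  calc (t / t₁) ^ logb C 2 ≤ (C ^ (n + 1)) ^ logb C 2 :=
        rpow_le_rpow (div_pos (ht₁.trans_le ht) ht₁).le hup.le hα.le
    _ = 2 * 2 ^ n := by
        rw [← rpow_pow_comm (by positivity), rpow_logb (by positivity) hC.ne' two_pos]
        ring
    _ ≤ 2 * (2 ^ n * v t₁) := by gcongr; exact le_mul_of_one_le_right (by positivity) hvt₁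
    _ ≤ 2 * v (C ^ n * t₁) := by gcongr; exact two_pow_mul_le_of_two_mul_le (by positivity) hv n ht₁.le
    _ ≤ 2 * v t := by gcongr; exact hmono (by simp; positivity) (by simp; linarith) hCn

theorem one_lt_of_two_mul_le_comp_mul {w : ℝ → ℝ} (hmono : MonotoneOn w (Ici 0))
    (hunb : ∀ M : ℝ, ∃ t ≥ (0:ℝ), M ≤ w t) {C B : ℝ} (hC : 0 < C)
    (h : ∀ t ≥ (0:ℝ), 2 * w t ≤ w (C * t) + B) : 1 < C := by
  by_contra! hC1
  obtain ⟨t, ht, hwt⟩ := hunb (B + 1)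
  have : w (C * t) ≤ w t :=
    hmono (mem_Ici.2 (by positivity)) ht (mul_le_of_le_one_left ht hC1)
  linarith [h t ht]

theorem exists_mul_rpow_le_add_of_two_mul_le {w : ℝ → ℝ} (hmono : MonotoneOn w (Ici 0))
    (hunb : ∀ M : ℝ, ∃ t ≥ (0:ℝ), M ≤ w t) {C B : ℝ} (hC : 1 < C)
    (h : ∀ t ≥ (0:ℝ), 2 * w t ≤ w (C * t) + B) :
    ∃ b > (0:ℝ), ∃ K, ∀ t ≥ (0:ℝ), b * t ^ logb C 2 ≤ w t + K := by
  set α := logb C 2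
  obtain ⟨t₀, ht₀, hwt₀⟩ := hunb (B + 1)
  set t₁ := max t₀ 1
  have ht₁ : 0 < t₁ := lt_max_of_lt_right one_pos
  have hvt₁ : 1 ≤ w t₁ - B := by
    linarith [hmono (mem_Ici.2 ht₀) (mem_Ici.2 ht₁.le) (le_max_left t₀ 1)]
  refine ⟨1 / (2 * t₁ ^ α), by positivity, max (-B) (1 / 2 - w 0), fun t ht => ?_⟩
  have hscale : 1 / (2 * t₁ ^ α) * t ^ α = (t / t₁) ^ α / 2 := by
    rw [div_rpow ht ht₁.le]; ring
  rw [hscale]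
  rcases le_total t₁ t with ht₁t | htt₁
  · have := rpow_logb_le_of_two_mul_le (v := fun t => w t - B)
      (fun x hx y hy hxy => sub_le_sub_right (hmono hx hy hxy) B) hC
      (fun t ht => by linarith [h t ht]) ht₁ hvt₁ ht₁t
    linarith [le_max_left (-B) (1 / 2 - w 0)]
  · have : (t / t₁) ^ α ≤ 1 :=
      rpow_le_one (by positivity) ((div_le_one ht₁).2 htt₁) (logb_pos hC one_lt_two).le
    linarith [hmono (mem_Ici.2 le_rfl) (mem_Ici.2 ht) ht, le_max_right (-B) (1 / 2 - w 0)]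

theorem stmt_3_general (w : ℝ → ℝ)
    (hmono : MonotoneOn w (Set.Ici 0))
    (hunb : ∀ C : ℝ, ∃ t ≥ (0:ℝ), C ≤ w t)
    (C A : ℝ) (hC : 0 < C)
    (h : ∀ t ≥ (0:ℝ), 2 * w t ≤ w (C * t) + Real.log A) :
    ∃ C' > (1:ℝ), MeasureTheory.IntegrableOn
      (fun t => Real.exp (w t - w (C' * t))) (Set.Ioi (0:ℝ)) := by
  have hC1 := one_lt_of_two_mul_le_comp_mul hmono hunb hC h
  obtain ⟨b, hb, K, hgrowth⟩ := exists_mul_rpow_le_add_of_two_mul_le hmono hunb hC1 h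
  refine ⟨C, hC1, ?_⟩
  have hmonoC : MonotoneOn (fun t => w (C * t)) (Ioi 0) := fun x hx y hy hxy =>
    hmono (mem_Ici.2 (by have := mem_Ioi.1 hx; positivity))
      (mem_Ici.2 (by have := mem_Ioi.1 hy; positivity)) (mul_le_mul_of_nonneg_left hxy hC.le)
  have hmeas : AEStronglyMeasurable (fun t => exp (w t - w (C * t))) (volume.restrict (Ioi 0)) :=
    ((aemeasurable_restrict_of_monotoneOn measurableSet_Ioi (hmono.mono Ioi_subset_Ici_self)).sub
      (aemeasurable_restrict_of_monotoneOn measurableSet_Ioi hmonoC)).exp.aestronglyMeasurable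
  refine (((integrableOn_exp_neg_mul_rpow (logb_pos hC1 one_lt_two) hb).const_mul
    (exp (log A + K))).mono' hmeas) ?_
  filter_upwards [ae_restrict_mem measurableSet_Ioi] with t ht
  rw [norm_of_nonneg (exp_pos _).le, ← exp_add]
  gcongr
  linarith [h t (le_of_lt ht), hgrowth t (le_of_lt ht)]

theorem stmt_3 (w : ℝ → ℝ)
    (hmono : MonotoneOn w (Set.Ici 0))
    (hpos : ∀ t ≥ (0:ℝ), 0 ≤ w t)
    (hunb : ∀ C : ℝ, ∃ t ≥ (0:ℝ), C ≤ w t)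
    (C A : ℝ) (hC : 0 < C) (hA : 1 < A)
    (h : ∀ t ≥ (0:ℝ), 2 * w t ≤ w (C * t) + Real.log A) :
    ∃ C' > (1:ℝ), MeasureTheory.IntegrableOn
      (fun t => Real.exp (w t - w (C' * t))) (Set.Ioi (0:ℝ)) :=
  stmt_3_general w hmono hunb C A hC h
end

section
/- Let w : [0,∞) → [0,∞) be a non-decreasing unbounded function satisfying: there exists A > 1 such that 2w(t/A) ≤ w(t) + log A for all t ≥ 0. Then there exist constants c > 0 and τ > 0 such that w(t) ≥ c · t^{log 2 / log A} for all t ≥ τ. In particular, there exists τ' > 0 with w(t) ≥ 2 log(1+t) for all t ≥ τ'. -/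
theorem stmt_4 (w : ℝ → ℝ)
    (hmono : MonotoneOn w (Set.Ici 0))
    (hpos : ∀ t ≥ (0:ℝ), 0 ≤ w t)
    (hunb : ∀ C : ℝ, ∃ t ≥ (0:ℝ), C ≤ w t)
    (A : ℝ) (hA : 1 < A)
    (h : ∀ t ≥ (0:ℝ), 2 * w (t / A) ≤ w t + Real.log A) :
    (∃ c > (0:ℝ), ∃ τ > (0:ℝ), ∀ t ≥ τ,
      c * t ^ (Real.log 2 / Real.log A) ≤ w t) ∧
    (∃ τ' > (0:ℝ), ∀ t ≥ τ', 2 * Real.log (1 + t) ≤ w t) := by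
  have hA0 : (0:ℝ) < A := lt_trans one_pos hA
  set L := Real.log A with hLdef
  have hL : 0 < L := Real.log_pos hA
  set α := Real.log 2 / L with hαdef
  have hα : 0 < α := div_pos (Real.log_pos one_lt_two) hL
  obtain ⟨s₀, hs₀0, hs₀⟩ := hunb (2 * L)
  set τ₀ := max s₀ 1 with hτ₀def
  have hτ₀1 : (1:ℝ) ≤ τ₀ := le_max_right _ _
  have hτ₀0 : (0:ℝ) < τ₀ := lt_of_lt_of_le one_pos hτ₀1
  have hwτ₀ : 2 * L ≤ w τ₀ :=
    le_trans hs₀ (hmono (Set.mem_Ici.2 hs₀0) (Set.mem_Ici.2 hτ₀0.le) (le_max_left _ _))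
  -- iterated inequality
  have key : ∀ n : ℕ, ∀ t : ℝ, 0 ≤ t → 2^n * (w (t / A^n) - L) ≤ w t - L := by
    intro n
    induction n with
    | zero => intro t ht; simp
    | succ n ih =>
      intro t ht
      have h1 : 0 ≤ t / A := div_nonneg ht hA0.le
      have h2 := ih (t / A) h1
      have h3 : 2 * (w (t / A) - L) ≤ w t - L := by
        have := h t ht; linarith
      have heq : t / A ^ (n+1) = (t / A) / A ^ n := by
        rw [pow_succ', ← div_div]
      calc (2:ℝ)^(n+1) * (w (t / A^(n+1)) - L)
          = 2 * ((2:ℝ)^n * (w ((t/A) / A^n) - L)) := by rw [heq]; ring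
        _ ≤ 2 * (w (t/A) - L) := by linarith
        _ ≤ w t - L := h3
  have hbase : 0 < τ₀ * A := mul_pos hτ₀0 hA0
  have hLα : L * α = Real.log 2 := by
    rw [hαdef, mul_comm, div_mul_cancel₀ _ hL.ne']
  have hAα : A ^ α = (2:ℝ) := by
    rw [Real.rpow_def_of_pos hA0, ← hLdef, hLα, Real.exp_log two_pos]
  have main : ∀ t ≥ τ₀, L / (τ₀ * A) ^ α * t ^ α ≤ w t := by
    intro t ht
    have ht0 : 0 < t := lt_of_lt_of_le hτ₀0 ht
    have hrat : (1:ℝ) ≤ t / τ₀ := (one_le_div hτ₀0).2 ht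
    have hx : 0 ≤ Real.log (t / τ₀) / L := div_nonneg (Real.log_nonneg hrat) hL.le
    set n := ⌊Real.log (t / τ₀) / L⌋₊ with hn
    have hfl : (n:ℝ) ≤ Real.log (t/τ₀) / L := Nat.floor_le hx
    have hfu : Real.log (t/τ₀) / L < n + 1 := Nat.lt_floor_add_one _
    have hAn : A ^ n ≤ t / τ₀ := by
      have h1 : Real.log (A ^ n) ≤ Real.log (t / τ₀) := by
        rw [Real.log_pow]
        calc (n:ℝ) * L ≤ (Real.log (t/τ₀)/L) * L := by nlinarith
          _ = Real.log (t/τ₀) := div_mul_cancel₀ _ hL.ne'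
      exact (Real.log_le_log_iff (pow_pos hA0 n) (div_pos ht0 hτ₀0)).1 h1
    have hAn' : t / τ₀ < A ^ (n+1) := by
      have h1 : Real.log (t/τ₀) < Real.log (A ^ (n+1)) := by
        rw [Real.log_pow]
        push_cast
        calc Real.log (t/τ₀) = (Real.log (t/τ₀)/L) * L := (div_mul_cancel₀ _ hL.ne').symm
          _ < ((n:ℝ)+1) * L := by nlinarith
      exact (Real.log_lt_log_iff (div_pos ht0 hτ₀0) (pow_pos hA0 (n+1))).1 h1
    have htge : A ^ n * τ₀ ≤ t := (le_div_iff₀ hτ₀0).1 hAn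
    have hτle : τ₀ ≤ t / A ^ n := by
      rw [le_div_iff₀ (pow_pos hA0 n)]
      linarith
    have htlt : t < τ₀ * A ^ (n+1) := by
      have := (div_lt_iff₀ hτ₀0).1 hAn'
      linarith
    have hw1 : 2 * L ≤ w (t / A ^ n) :=
      le_trans hwτ₀ (hmono (Set.mem_Ici.2 hτ₀0.le)
        (Set.mem_Ici.2 (le_trans hτ₀0.le hτle)) hτle)
    have hk := key n t ht0.le
    have h2pos : (0:ℝ) < 2 ^ n := pow_pos two_pos n
    have hwt : (2:ℝ)^n * L ≤ w t := by
      have := mul_le_mul_of_nonneg_left (by linarith : L ≤ w (t / A ^ n) - L) h2pos.le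
      nlinarith
    have h2n : ((2:ℝ))^n = (A ^ n : ℝ) ^ α := by
      rw [← hAα, ← Real.rpow_natCast (A ^ α) n, ← Real.rpow_natCast A n,
        ← Real.rpow_mul hA0.le, ← Real.rpow_mul hA0.le, mul_comm]
    have hre : L / (τ₀*A) ^ α * t ^ α = L * (t / (τ₀*A)) ^ α := by
      rw [Real.div_rpow ht0.le hbase.le]; ring
    have hle2 : (t / (τ₀*A)) ^ α ≤ (A ^ n : ℝ) ^ α := by
      apply Real.rpow_le_rpow (by positivity) _ hα.le
      rw [div_le_iff₀ hbase]
      calc t ≤ τ₀ * A^(n+1) := le_of_lt htlt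
        _ = A ^ n * (τ₀ * A) := by rw [pow_succ]; ring
    have : L * (t / (τ₀*A)) ^ α ≤ L * (2:ℝ)^n := by
      rw [h2n]
      exact mul_le_mul_of_nonneg_left hle2 hL.le
    rw [hre]
    nlinarith
  set c := L / (τ₀ * A) ^ α with hc
  have hc0 : 0 < c := by positivity
  refine ⟨⟨c, hc0, τ₀, hτ₀0, main⟩, ?_⟩
  -- second part
  have hlo : (fun t : ℝ => Real.log t) =o[Filter.atTop] fun t => t ^ α :=
    isLittleO_log_rpow_atTop hα
  have e1 : ∀ᶠ t : ℝ in Filter.atTop, ‖Real.log t‖ ≤ (c/4) * ‖t ^ α‖ :=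
    hlo.def (by positivity)
  have e2 : ∀ᶠ t : ℝ in Filter.atTop, 4 * Real.log 2 / c ≤ t ^ α :=
    (tendsto_rpow_atTop hα).eventually_ge_atTop _
  have e3 : ∀ᶠ t : ℝ in Filter.atTop, max τ₀ 1 ≤ t := Filter.eventually_ge_atTop _
  obtain ⟨a, ha⟩ := Filter.eventually_atTop.1 ((e1.and e2).and e3)
  refine ⟨max a 1, lt_of_lt_of_le one_pos (le_max_right _ _), ?_⟩
  intro t ht
  obtain ⟨⟨h1, h2⟩, h3⟩ := ha t (le_trans (le_max_left _ _) ht)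
  have ht1 : (1:ℝ) ≤ t := le_trans (le_max_right _ _) h3
  have htτ : τ₀ ≤ t := le_trans (le_max_left _ _) h3
  have ht0 : 0 < t := lt_of_lt_of_le one_pos ht1
  have hlog0 : 0 ≤ Real.log t := Real.log_nonneg ht1
  have hrp0 : 0 < t ^ α := Real.rpow_pos_of_pos ht0 α
  rw [Real.norm_eq_abs, Real.norm_eq_abs, abs_of_nonneg hlog0, abs_of_nonneg hrp0.le] at h1
  have hstep : Real.log (1 + t) ≤ Real.log 2 + Real.log t := by
    rw [← Real.log_mul two_ne_zero ht0.ne']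
    exact Real.log_le_log (by linarith) (by linarith)
  have h2' : 4 * Real.log 2 ≤ c * t ^ α := by
    rw [mul_comm c]
    exact (div_le_iff₀ hc0).1 h2
  have hmain := main t htτ
  linarith [hstep, h1, h2', hmain]
end

section
/- Let a > 0 and b ∈ ℝ, or a = 0 and b ≥ 0, and let w : [0,∞) → [0,∞) be a non-decreasing unbounded function with w(t) = exp(t^a (log(e+t))^b) for all sufficiently large t. Then w satisfies condition (ε)₀, i.e., ∫₀^∞ w(t) e^{-μt} dt < ∞ for all μ > 0, if and only if either 0 ≤ a < 1, or a = 1 and b < 0. -/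
/-!
With `φ(t) = t ^ a * log (e + t) ^ b`: if `a < 1`, or `a = 1` and `b < 0`, then `φ(t) = o(t)`, so
`w(t) e^{-μt} = O(e^{-μt/2})` at infinity, while a monotone `w` is integrable on compacts.
Otherwise `φ(t) ≥ t` eventually (for `a > 1` since every power of the logarithm is
`o(t ^ (a - 1))`), so `w(t) e^{-t} ≥ 1` near infinity.
-/

open Real Filter Asymptotics MeasureTheory Set

lemma isLittleO_log_const_add_rpow_rpow_atTop (c r : ℝ) {s : ℝ} (hs : 0 < s) :
    (fun t => log (c + t) ^ r) =o[atTop] fun t => t ^ s := by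
  have hshift : Tendsto (fun t => c + t) atTop atTop := tendsto_atTop_add_const_left _ c tendsto_id
  have hlin : (fun t => c + t) =O[atTop] fun t => t :=
    (isLittleO_const_id_atTop c).isBigO.add (isBigO_refl _ _)
  exact ((isLittleO_log_rpow_rpow_atTop r hs).comp_tendsto hshift).trans_isBigO
    (hlin.rpow hs.le (eventually_ge_atTop 0))

lemma isLittleO_rpow_mul_log_rpow_id {a b : ℝ} (h : a < 1 ∨ (a = 1 ∧ b < 0)) :
    (fun t => t ^ a * log (exp 1 + t) ^ b) =o[atTop] fun t => t := by
  rcases h with ha | ⟨rfl, hb⟩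
  · have := (isBigO_refl (fun t : ℝ => t ^ a) atTop).mul_isLittleO
      (isLittleO_log_const_add_rpow_rpow_atTop (exp 1) b (sub_pos.2 ha))
    refine this.congr' EventuallyEq.rfl ?_
    filter_upwards [eventually_gt_atTop 0] with t ht
    rw [← rpow_add ht, add_sub_cancel, rpow_one]
  · have hlog : Tendsto (fun t => log (exp 1 + t)) atTop atTop :=
      tendsto_log_atTop.comp (tendsto_atTop_add_const_left _ _ tendsto_id)
    have hdecay : (fun t => log (exp 1 + t) ^ b) =o[atTop] fun _ => (1 : ℝ) := by
      rw [isLittleO_one_iff, ← neg_neg b]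
      exact (tendsto_rpow_neg_atTop (neg_pos.2 hb)).comp hlog
    simpa using (isBigO_refl (fun t : ℝ => t) atTop).mul_isLittleO hdecay

lemma eventually_le_rpow_mul_log_rpow {a b : ℝ} (h : 1 < a ∨ (a = 1 ∧ 0 ≤ b)) :
    ∀ᶠ t in atTop, t ≤ t ^ a * log (exp 1 + t) ^ b := by
  by_cases hb : 0 ≤ b
  · have ha : 1 ≤ a := by rcases h with ha | ⟨rfl, -⟩ <;> linarith
    filter_upwards [eventually_ge_atTop 1] with t ht
    have hlog : 1 ≤ log (exp 1 + t) := by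
      rw [le_log_iff_exp_le (by positivity)]; linarith
    calc t = t ^ (1 : ℝ) * 1 := by rw [rpow_one, mul_one]
      _ ≤ t ^ a * log (exp 1 + t) ^ b := by
        gcongr
        exact one_le_rpow hlog hb
  · have ha : 1 < a := h.resolve_right fun h' => hb h'.2
    filter_upwards [(isLittleO_log_const_add_rpow_rpow_atTop (exp 1) (-b) (sub_pos.2 ha)).bound
      one_pos, eventually_gt_atTop 0] with t hbound ht
    have hlog : 0 < log (exp 1 + t) := log_pos (by linarith [add_one_le_exp 1])
    rw [norm_of_nonneg (by positivity), norm_of_nonneg (by positivity), one_mul] at hbound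
    calc t = t * (log (exp 1 + t) ^ (-b) * log (exp 1 + t) ^ b) := by
          rw [rpow_neg hlog.le, inv_mul_cancel₀ (by positivity), mul_one]
      _ ≤ t * (t ^ (a - 1) * log (exp 1 + t) ^ b) := by gcongr
      _ = t ^ a * log (exp 1 + t) ^ b := by
          rw [← mul_assoc, ← rpow_one_add' ht.le (by linarith), add_sub_cancel]

lemma locallyIntegrableOn_mul_of_monotoneOn {w g : ℝ → ℝ} {c : ℝ} (hw : MonotoneOn w (Ici c))
    (hg : Continuous g) : LocallyIntegrableOn (fun t => w t * g t) (Ici c) := by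
  rw [locallyIntegrableOn_iff isClosed_Ici.isLocallyClosed]
  exact fun k hk hkc => ((hw.mono hk).integrableOn_isCompact hkc).mul_continuousOn
    hg.continuousOn hkc

lemma integrableOn_mul_exp_neg_of_monotoneOn {w φ : ℝ → ℝ} {c μ : ℝ}
    (hmono : MonotoneOn w (Ici c)) (hw : ∀ᶠ t in atTop, w t = exp (φ t))
    (hφ : φ =o[atTop] fun t => t) (hμ : 0 < μ) :
    IntegrableOn (fun t => w t * exp (-μ * t)) (Ioi c) := by
  have hdecay : (fun t => w t * exp (-μ * t)) =O[atTop] fun t => exp (-(μ / 2) * t) := by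
    refine IsBigO.of_bound 1 ?_
    filter_upwards [hw, hφ.bound (half_pos hμ), eventually_ge_atTop 0] with t hwt hφt ht
    rw [hwt, ← exp_add, norm_of_nonneg (exp_nonneg _), norm_of_nonneg (exp_nonneg _), one_mul,
      exp_le_exp]
    rw [norm_of_nonneg ht] at hφt
    linarith [(le_norm_self (φ t)).trans hφt]
  have hexp : IntegrableAtFilter (fun t => exp (-(μ / 2) * t)) atTop :=
    ⟨Ioi 0, Ioi_mem_atTop 0, exp_neg_integrableOn_Ioi 0 (half_pos hμ)⟩
  exact ((locallyIntegrableOn_mul_of_monotoneOn hmono (by fun_prop)).integrableOn_of_isBigO_atTop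
    hdecay hexp).mono_set Ioi_subset_Ici_self

lemma not_integrableOn_Ioi_of_eventually_le_norm {E : Type*} [NormedAddCommGroup E] {f : ℝ → E}
    {c ε : ℝ} (hε : 0 < ε) (hf : ∀ᶠ t in atTop, ε ≤ ‖f t‖) : ¬ IntegrableOn f (Ioi c) := by
  intro hint
  obtain ⟨T, hT⟩ := eventually_atTop.mp hf
  have hconst : IntegrableOn (fun _ => ε) (Ioi (max c T)) := by
    refine Integrable.mono (hint.mono_set (Ioi_subset_Ioi (le_max_left c T)))
      aestronglyMeasurable_const ?_
    refine (ae_restrict_iff' measurableSet_Ioi).mpr (ae_of_all _ fun t ht => ?_)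
    rw [norm_of_nonneg hε.le]
    exact hT t ((le_max_right c T).trans (mem_Ioi.mp ht).le)
  simp [integrableOn_const_iff, hε.ne'] at hconst

theorem stmt_6_general (a b : ℝ) (w : ℝ → ℝ)
    (hmono : MonotoneOn w (Set.Ici 0))
    (hw : ∃ T : ℝ, ∀ t ≥ T,
      w t = Real.exp (t ^ a * (Real.log (Real.exp 1 + t)) ^ b)) :
    (∀ μ > (0:ℝ), MeasureTheory.IntegrableOn
        (fun t => w t * Real.exp (-μ * t)) (Set.Ioi (0:ℝ)))
      ↔ (a < 1 ∨ (a = 1 ∧ b < 0)) := by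
  have hw' : ∀ᶠ t in atTop, w t = exp (t ^ a * log (exp 1 + t) ^ b) := eventually_atTop.mpr hw
  refine ⟨fun hint => ?_, fun hab μ hμ =>
    integrableOn_mul_exp_neg_of_monotoneOn hmono hw' (isLittleO_rpow_mul_log_rpow_id hab) hμ⟩
  by_contra hab
  have hgrowth : ∀ᶠ t in atTop, t ≤ t ^ a * log (exp 1 + t) ^ b :=
    eventually_le_rpow_mul_log_rpow (by grind)
  refine not_integrableOn_Ioi_of_eventually_le_norm one_pos ?_ (hint 1 one_pos)
  filter_upwards [hw', hgrowth] with t hwt ht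
  rw [hwt, ← exp_add, norm_of_nonneg (exp_nonneg _)]
  exact one_le_exp (by linarith)

theorem stmt_6 (a b : ℝ) (hab : (0 < a) ∨ (a = 0 ∧ 0 ≤ b)) (w : ℝ → ℝ)
    (hmono : MonotoneOn w (Set.Ici 0))
    (hpos : ∀ t ≥ (0:ℝ), 0 ≤ w t)
    (hunb : ∀ C : ℝ, ∃ t ≥ (0:ℝ), C ≤ w t)
    (hw : ∃ T : ℝ, ∀ t ≥ T,
      w t = Real.exp (t ^ a * (Real.log (Real.exp 1 + t)) ^ b)) :
    (∀ μ > (0:ℝ), MeasureTheory.IntegrableOn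
        (fun t => w t * Real.exp (-μ * t)) (Set.Ioi (0:ℝ)))
      ↔ (a < 1 ∨ (a = 1 ∧ b < 0)) :=
  stmt_6_general a b w hmono hw
end

section
/- Let K ⊆ ℂ be closed and let α, β ∈ ℂ \ K lie in the same connected component of ℂ \ K. Then for every ε > 0 there exists a rational function R whose only pole is β (i.e., R is a polynomial in (z - β)^{-1}) such that sup_{ξ ∈ K} |1/(ξ - α) - R(ξ)| ≤ ε. -/
open Metric Polynomial Finset

/-- `f` is uniformly approximable on `K` by polynomials in `(ξ - β)⁻¹`. -/
def Appr (K : Set ℂ) (β : ℂ) (f : ℂ → ℂ) : Prop :=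
  ∀ ε > (0:ℝ), ∃ p : Polynomial ℂ, ∀ ξ ∈ K, ‖f ξ - p.eval ((ξ - β)⁻¹)‖ ≤ ε

lemma appr_const (K : Set ℂ) (β c : ℂ) : Appr K β (fun _ => c) := by
  intro ε hε
  exact ⟨Polynomial.C c, fun ξ _ => by simp [hε.le]⟩

lemma appr_add {K : Set ℂ} {β : ℂ} {f g : ℂ → ℂ} (hf : Appr K β f) (hg : Appr K β g) :
    Appr K β (fun ξ => f ξ + g ξ) := by
  intro ε hε
  obtain ⟨p, hp⟩ := hf (ε/2) (by linarith)
  obtain ⟨q, hq⟩ := hg (ε/2) (by linarith)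
  refine ⟨p + q, fun ξ hξ => ?_⟩
  have h1 := hp ξ hξ
  have h2 := hq ξ hξ
  have : f ξ + g ξ - (p + q).eval ((ξ - β)⁻¹)
      = (f ξ - p.eval ((ξ - β)⁻¹)) + (g ξ - q.eval ((ξ - β)⁻¹)) := by
    simp; ring
  rw [this]
  calc ‖_ + _‖ ≤ _ + _ := norm_add_le _ _
    _ ≤ ε/2 + ε/2 := add_le_add h1 h2
    _ = ε := by ring

lemma appr_smul {K : Set ℂ} {β : ℂ} {f : ℂ → ℂ} (c : ℂ) (hf : Appr K β f) :
    Appr K β (fun ξ => c * f ξ) := by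
  rcases eq_or_ne c 0 with rfl | hc
  · simpa using appr_const K β 0
  · intro ε hε
    have hc' : (0:ℝ) < ‖c‖ := norm_pos_iff.mpr hc
    obtain ⟨p, hp⟩ := hf (ε / ‖c‖) (div_pos hε hc')
    refine ⟨Polynomial.C c * p, fun ξ hξ => ?_⟩
    have h1 := hp ξ hξ
    have : c * f ξ - (Polynomial.C c * p).eval ((ξ - β)⁻¹)
        = c * (f ξ - p.eval ((ξ - β)⁻¹)) := by simp; ring
    rw [this, norm_mul]
    calc ‖c‖ * ‖f ξ - p.eval ((ξ - β)⁻¹)‖ ≤ ‖c‖ * (ε / ‖c‖) :=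
          mul_le_mul_of_nonneg_left h1 (norm_nonneg c)
      _ = ε := by rw [mul_comm]; exact div_mul_cancel₀ ε hc'.ne'

lemma appr_mul {K : Set ℂ} {β : ℂ} {f g : ℂ → ℂ} (Mf Mg : ℝ)
    (hMf : ∀ ξ ∈ K, ‖f ξ‖ ≤ Mf) (hMg : ∀ ξ ∈ K, ‖g ξ‖ ≤ Mg)
    (hf : Appr K β f) (hg : Appr K β g) :
    Appr K β (fun ξ => f ξ * g ξ) := by
  intro ε hε
  set M : ℝ := max Mf (max Mg 0) + 1 with hM
  have hM1 : (1:ℝ) ≤ M := by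
    have : (0:ℝ) ≤ max Mf (max Mg 0) := le_trans (le_max_right Mg 0) (le_max_right Mf (max Mg 0))
    linarith
  have hM0 : (0:ℝ) < M := by linarith
  set δ : ℝ := min 1 (ε / (2 * M)) with hδdef
  have hδ0 : 0 < δ := lt_min one_pos (by positivity)
  obtain ⟨p, hp⟩ := hf δ hδ0
  obtain ⟨q, hq⟩ := hg δ hδ0
  refine ⟨p * q, fun ξ hξ => ?_⟩
  set x := (ξ - β)⁻¹
  have h1 := hp ξ hξ
  have h2 := hq ξ hξ
  have hfb : ‖f ξ‖ ≤ M := le_trans (hMf ξ hξ) (by rw [hM]; linarith [le_max_left Mf (max Mg 0)])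
  have hqb : ‖q.eval x‖ ≤ M := by
    have : ‖q.eval x‖ ≤ ‖g ξ‖ + ‖g ξ - q.eval x‖ := by
      have := norm_sub_norm_le (g ξ) (q.eval x)
      have h := norm_add_le (g ξ - q.eval x) (q.eval x)
      calc ‖q.eval x‖ = ‖g ξ - (g ξ - q.eval x)‖ := by ring_nf
        _ ≤ ‖g ξ‖ + ‖g ξ - q.eval x‖ := norm_sub_le _ _
    have hgb : ‖g ξ‖ ≤ max Mf (max Mg 0) :=
      le_trans (hMg ξ hξ) (le_trans (le_max_left _ _) (le_max_right _ _))
    have hδ1 : δ ≤ 1 := min_le_left _ _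
    linarith [h2]
  have key : f ξ * g ξ - (p * q).eval x
      = f ξ * (g ξ - q.eval x) + q.eval x * (f ξ - p.eval x) := by
    simp only [Polynomial.eval_mul]; ring
  rw [key]
  have hδ2 : δ ≤ ε / (2 * M) := min_le_right _ _
  calc ‖_ + _‖ ≤ ‖f ξ * (g ξ - q.eval x)‖ + ‖q.eval x * (f ξ - p.eval x)‖ := norm_add_le _ _
    _ = ‖f ξ‖ * ‖g ξ - q.eval x‖ + ‖q.eval x‖ * ‖f ξ - p.eval x‖ := by rw [norm_mul, norm_mul]
    _ ≤ M * δ + M * δ := add_le_add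
        (mul_le_mul hfb h2 (norm_nonneg _) hM0.le)
        (mul_le_mul hqb h1 (norm_nonneg _) hM0.le)
    _ ≤ M * (ε / (2*M)) + M * (ε / (2*M)) := by
        have := mul_le_mul_of_nonneg_left hδ2 hM0.le; linarith
    _ = ε := by field_simp; ring

lemma appr_close {K : Set ℂ} {β : ℂ} {f : ℂ → ℂ}
    (h : ∀ δ > (0:ℝ), ∃ g : ℂ → ℂ, Appr K β g ∧ ∀ ξ ∈ K, ‖f ξ - g ξ‖ ≤ δ) :
    Appr K β f := by
  intro ε hε
  obtain ⟨g, hg, hfg⟩ := h (ε/2) (by linarith)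
  obtain ⟨p, hp⟩ := hg (ε/2) (by linarith)
  refine ⟨p, fun ξ hξ => ?_⟩
  calc ‖f ξ - p.eval ((ξ - β)⁻¹)‖
      = ‖(f ξ - g ξ) + (g ξ - p.eval ((ξ - β)⁻¹))‖ := by ring_nf
    _ ≤ ‖f ξ - g ξ‖ + ‖g ξ - p.eval ((ξ - β)⁻¹)‖ := norm_add_le _ _
    _ ≤ ε/2 + ε/2 := add_le_add (hfg ξ hξ) (hp ξ hξ)
    _ = ε := by ring

lemma appr_pow {K : Set ℂ} {β γ : ℂ} {d : ℝ} (hd : 0 < d)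
    (hdist : ∀ ξ ∈ K, d ≤ ‖ξ - γ‖)
    (h : Appr K β (fun ξ => (ξ - γ)⁻¹)) (n : ℕ) :
    Appr K β (fun ξ => ((ξ - γ)⁻¹) ^ n) := by
  induction n with
  | zero => simpa using appr_const K β 1
  | succ n ih =>
      have hb : ∀ ξ ∈ K, ‖(ξ - γ)⁻¹‖ ≤ d⁻¹ := by
        intro ξ hξ
        rw [norm_inv]
        exact inv_anti₀ hd (hdist ξ hξ)
      have hbn : ∀ ξ ∈ K, ‖((ξ - γ)⁻¹) ^ n‖ ≤ (d⁻¹) ^ n := by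
        intro ξ hξ
        rw [norm_pow]
        exact pow_le_pow_left₀ (norm_nonneg _) (hb ξ hξ) n
      have := appr_mul ((d⁻¹)^n) (d⁻¹) hbn hb ih h
      intro ε hε
      obtain ⟨p, hp⟩ := this ε hε
      exact ⟨p, fun ξ hξ => by simpa [pow_succ] using hp ξ hξ⟩

lemma appr_sum {K : Set ℂ} {β : ℂ} (F : ℕ → ℂ → ℂ) (n : ℕ)
    (h : ∀ i, Appr K β (F i)) :
    Appr K β (fun ξ => ∑ i ∈ Finset.range n, F i ξ) := by
  induction n with
  | zero => simpa using appr_const K β 0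
  | succ n ih =>
      have := appr_add ih (h n)
      intro ε hε
      obtain ⟨p, hp⟩ := this ε hε
      exact ⟨p, fun ξ hξ => by simpa [Finset.sum_range_succ] using hp ξ hξ⟩

/-- The pole-shifting step: moving the pole by less than half the distance to `K`. -/
lemma appr_step {K : Set ℂ} {β γ γ' : ℂ} {d : ℝ} (hd : 0 < d)
    (hdist : ∀ ξ ∈ K, d ≤ ‖ξ - γ‖) (hγγ' : ‖γ' - γ‖ ≤ d / 2)
    (h : Appr K β (fun ξ => (ξ - γ)⁻¹)) :
    Appr K β (fun ξ => (ξ - γ')⁻¹) := by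
  set c := γ' - γ with hc
  have hdist' : ∀ ξ ∈ K, d / 2 ≤ ‖ξ - γ'‖ := by
    intro ξ hξ
    have h1 := hdist ξ hξ
    have h2 : ‖ξ - γ‖ ≤ ‖ξ - γ'‖ + ‖γ' - γ‖ := by
      calc ‖ξ - γ‖ = ‖(ξ - γ') + (γ' - γ)‖ := by ring_nf
        _ ≤ _ := norm_add_le _ _
    linarith
  apply appr_close
  intro δ hδ
  -- choose N with (2/d) * (1/2)^N ≤ δ
  obtain ⟨N, hN⟩ := exists_pow_lt_of_lt_one (show (0:ℝ) < δ * d / 2 by positivity)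
    (show (1:ℝ)/2 < 1 by norm_num)
  refine ⟨fun ξ => ∑ n ∈ Finset.range (N+1), c ^ n * ((ξ - γ)⁻¹) ^ (n+1), ?_, ?_⟩
  · exact appr_sum _ _ (fun i => appr_smul _ (appr_pow hd hdist h (i+1)))
  · intro ξ hξ
    have hξγ : ξ - γ ≠ 0 := by
      intro h0
      have := hdist ξ hξ; rw [h0, norm_zero] at this; linarith
    have hξγ' : ξ - γ' ≠ 0 := by
      intro h0
      have := hdist' ξ hξ; rw [h0, norm_zero] at this; linarith
    set w := (ξ - γ)⁻¹ with hw
    have hww : (ξ - γ) * w = 1 := mul_inv_cancel₀ hξγ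
    -- algebraic identity
    have e1 : ∑ n ∈ Finset.range (N+1), c ^ n * w ^ (n+1)
        = w * ∑ n ∈ Finset.range (N+1), (c * w) ^ n := by
      rw [Finset.mul_sum]
      refine Finset.sum_congr rfl fun i _ => ?_
      rw [mul_pow, pow_succ]; ring
    have e2 : (ξ - γ') * (w * ∑ n ∈ Finset.range (N+1), (c * w) ^ n)
        = 1 - (c * w) ^ (N+1) := by
      have h3 : (ξ - γ') * w = 1 - c * w := by
        have : ξ - γ' = (ξ - γ) - c := by rw [hc]; ring
        rw [this, sub_mul, hww]
      rw [← mul_assoc, h3]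
      have := geom_sum_mul (c * w) (N+1)
      linear_combination -this
    have e3 : (ξ - γ')⁻¹ - ∑ n ∈ Finset.range (N+1), c ^ n * w ^ (n+1)
        = (c * w) ^ (N+1) * (ξ - γ')⁻¹ := by
      rw [e1]
      have hv : (ξ - γ')⁻¹ * (ξ - γ') = 1 := inv_mul_cancel₀ hξγ'
      linear_combination (-(ξ - γ')⁻¹) * e2 + (w * ∑ n ∈ Finset.range (N+1), (c * w) ^ n) * hv
    rw [e3, norm_mul, norm_pow, norm_mul]
    have hwb : ‖w‖ ≤ d⁻¹ := by
      rw [hw, norm_inv]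
      exact inv_anti₀ hd (hdist ξ hξ)
    have hcw : ‖c‖ * ‖w‖ ≤ 1/2 := by
      calc ‖c‖ * ‖w‖ ≤ (d/2) * d⁻¹ :=
            mul_le_mul hγγ' hwb (norm_nonneg _) (by positivity)
        _ = 1/2 := by field_simp
    have hinv : ‖(ξ - γ')⁻¹‖ ≤ 2/d := by
      rw [norm_inv]
      have := hdist' ξ hξ
      rw [show (2:ℝ)/d = (d/2)⁻¹ by field_simp]
      exact inv_anti₀ (by positivity) this
    calc (‖c‖ * ‖w‖) ^ (N+1) * ‖(ξ - γ')⁻¹‖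
        ≤ (1/2) ^ (N+1) * (2/d) := by
          apply mul_le_mul (pow_le_pow_left₀ (by positivity) hcw _) hinv (norm_nonneg _)
          positivity
      _ ≤ (1/2) ^ N * (2/d) := by
          apply mul_le_mul_of_nonneg_right _ (by positivity)
          exact pow_le_pow_of_le_one (by norm_num) (by norm_num) (Nat.le_succ N)
      _ ≤ (δ * d / 2) * (2/d) := mul_le_mul_of_nonneg_right hN.le (by positivity)
      _ = δ := by field_simp

theorem stmt_8 (K : Set ℂ) (hK : IsClosed K) (α β : ℂ) (hα : α ∉ K) (hβ : β ∉ K)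
    (hcc : β ∈ connectedComponentIn Kᶜ α) :
    ∀ ε > (0:ℝ), ∃ p : Polynomial ℂ,
      ∀ ξ ∈ K, ‖(ξ - α)⁻¹ - p.eval ((ξ - β)⁻¹)‖ ≤ ε := by
  rcases K.eq_empty_or_nonempty with rfl | hne
  · intro ε hε; exact ⟨0, fun ξ hξ => absurd hξ (Set.notMem_empty ξ)⟩
  -- distance positivity
  have hdpos : ∀ γ : ℂ, γ ∉ K → 0 < infDist γ K := by
    intro γ hγ
    exact (hK.notMem_iff_infDist_pos hne).mp hγ
  have hdist : ∀ γ : ℂ, ∀ ξ ∈ K, infDist γ K ≤ ‖ξ - γ‖ := by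
    intro γ ξ hξ
    have := Metric.infDist_le_dist_of_mem (x := γ) hξ
    rwa [dist_eq_norm, ← norm_neg, neg_sub] at this
  -- the step lemma in a convenient form
  have step : ∀ γ γ' : ℂ, γ ∉ K → ‖γ' - γ‖ ≤ infDist γ K / 2 →
      Appr K β (fun ξ => (ξ - γ)⁻¹) → Appr K β (fun ξ => (ξ - γ')⁻¹) := by
    intro γ γ' hγ hle h
    exact appr_step (hdpos γ hγ) (hdist γ) hle h
  -- clopen argument
  set u : Set ℂ := {γ | γ ∉ K ∧ Appr K β (fun ξ => (ξ - γ)⁻¹)} with hu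
  set v : Set ℂ := {γ | γ ∉ K ∧ ¬ Appr K β (fun ξ => (ξ - γ)⁻¹)} with hv
  have hball : ∀ γ : ℂ, γ ∉ K → ∀ γ' ∈ Metric.ball γ (infDist γ K / 3), γ' ∉ K ∧
      (Appr K β (fun ξ => (ξ - γ)⁻¹) ↔ Appr K β (fun ξ => (ξ - γ')⁻¹)) := by
    intro γ hγ γ' hγ'
    set d := infDist γ K with hd
    have hdp := hdpos γ hγ
    have hlt : dist γ' γ < d / 3 := Metric.mem_ball.mp hγ'
    have hnorm : ‖γ' - γ‖ < d / 3 := by rwa [← dist_eq_norm]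
    have hγ'K : γ' ∉ K := by
      intro hmem
      have := hdist γ γ' hmem
      linarith
    refine ⟨hγ'K, ?_, ?_⟩
    · intro h
      exact step γ γ' hγ (by linarith) h
    · intro h
      have hd' : 2 * d / 3 ≤ infDist γ' K := by
        have h1 : infDist γ K ≤ infDist γ' K + dist γ γ' := by
          have := Metric.infDist_le_infDist_add_dist (x := γ) (y := γ') (s := K)
          exact this
        rw [dist_comm] at h1
        linarith
      apply step γ' γ hγ'K _ h
      rw [← norm_neg, neg_sub]
      linarith
  have hu_open : IsOpen u := by
    rw [Metric.isOpen_iff]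
    rintro γ ⟨hγK, hγA⟩
    refine ⟨infDist γ K / 3, by have := hdpos γ hγK; positivity, fun γ' hγ' => ?_⟩
    obtain ⟨h1, h2⟩ := hball γ hγK γ' hγ'
    exact ⟨h1, h2.mp hγA⟩
  have hv_open : IsOpen v := by
    rw [Metric.isOpen_iff]
    rintro γ ⟨hγK, hγA⟩
    refine ⟨infDist γ K / 3, by have := hdpos γ hγK; positivity, fun γ' hγ' => ?_⟩
    obtain ⟨h1, h2⟩ := hball γ hγK γ' hγ'
    exact ⟨h1, fun h => hγA (h2.mpr h)⟩
  have hdisj : Disjoint u v := by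
    rw [Set.disjoint_left]
    rintro γ ⟨_, h1⟩ ⟨_, h2⟩
    exact h2 h1
  set C := connectedComponentIn Kᶜ α with hC
  have hCsub : C ⊆ Kᶜ := connectedComponentIn_subset _ _
  have hCuv : C ⊆ u ∪ v := by
    intro γ hγ
    have hγK : γ ∉ K := hCsub hγ
    by_cases h : Appr K β (fun ξ => (ξ - γ)⁻¹)
    · exact Or.inl ⟨hγK, h⟩
    · exact Or.inr ⟨hγK, h⟩
  have hpre : IsPreconnected C := isPreconnected_connectedComponentIn
  have hβu : β ∈ u := by
    refine ⟨hβ, ?_⟩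
    intro ε hε
    exact ⟨Polynomial.X, fun ξ hξ => by simp [hε.le]⟩
  have hαC : α ∈ C := mem_connectedComponentIn hα
  rcases hpre.subset_or_subset hu_open hv_open hdisj hCuv with h | h
  · exact (h hαC).2
  · exact absurd hβu (Set.disjoint_left.mp hdisj.symm (h hcc))
end

section
/- Let W = (w_N) be a weight function system satisfying (ε)₀ (for all N and all μ > 0, ∫₀^∞ w_N(t) e^{-μt} dt < ∞). Then for every N ∈ ℕ and every h > 0 there exists a holomorphic function Q on the horizontal strip T_h = {z ∈ ℂ : |Im z| < h} such that |Q(ξ)| ≥ exp(w_N(|Re ξ|)) for all ξ ∈ T_h. -/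
/-!
Monotonicity turns the integrability of `w_N(t) e^{-μt}` into the growth bound
`w_N(t) ≤ C e^{μt}`, by comparing `w_N(t)` with the integral over `(t, t + 1]`.
If `a h < π / 2`, then `Re cosh (a z) = cosh (a Re z) cos (a Im z) ≥ cos (a h) e^{a |Re z|} / 2`
on the strip `|Im z| ≤ h`, so the entire function `exp (K cosh (a z))` with `K = 2C / cos (a h)`
has modulus at least `exp (C e^{a |Re z|})` there. Take `a = π / (4h)`.
-/

open Real MeasureTheory Set

theorem Complex.cosh_re (z : ℂ) : (cosh z).re = Real.cosh z.re * Real.cos z.im := by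
  rw [← z.re_add_im, Complex.cosh_add, Complex.cosh_mul_I, Complex.sinh_mul_I]
  simp [← Complex.ofReal_cosh, ← Complex.ofReal_cos, ← Complex.ofReal_sinh,
    ← Complex.ofReal_sin]

theorem Real.exp_abs_div_two_le_cosh (x : ℝ) : exp |x| / 2 ≤ cosh x := by
  rw [cosh_eq]; linarith [exp_abs_le x]

theorem MonotoneOn.mul_exp_le_integral {f : ℝ → ℝ} {μ t : ℝ} (hmono : MonotoneOn f (Ici 0))
    (hnonneg : ∀ s ≥ 0, 0 ≤ f s) (hμ : 0 ≤ μ)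
    (hint : IntegrableOn (fun s => f s * exp (-μ * s)) (Ioi 0)) (ht : 0 ≤ t) :
    f t * exp (-μ * (t + 1)) ≤ ∫ s in Ioi 0, f s * exp (-μ * s) := by
  have hsub : Ioc t (t + 1) ⊆ Ioi 0 := fun s hs => ht.trans_lt hs.1
  calc f t * exp (-μ * (t + 1))
      = ∫ _ in Ioc t (t + 1), f t * exp (-μ * (t + 1)) := by simp
    _ ≤ ∫ s in Ioc t (t + 1), f s * exp (-μ * s) := by
        refine setIntegral_mono_on (integrableOn_const (by simp)) (hint.mono_set hsub)
          measurableSet_Ioc fun s hs => ?_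
        have hfs : f t ≤ f s := hmono ht (ht.trans hs.1.le) hs.1.le
        have hexp : exp (-μ * (t + 1)) ≤ exp (-μ * s) := exp_le_exp.2 (by nlinarith [hs.2])
        exact mul_le_mul hfs hexp (exp_nonneg _) ((hnonneg t ht).trans hfs)
    _ ≤ ∫ s in Ioi 0, f s * exp (-μ * s) := by
        refine setIntegral_mono_set hint ?_ (.of_forall hsub)
        filter_upwards [ae_restrict_mem measurableSet_Ioi] with s hs
        exact mul_nonneg (hnonneg s hs.le) (exp_nonneg _)

theorem MonotoneOn.exists_le_mul_exp {f : ℝ → ℝ} {μ : ℝ} (hmono : MonotoneOn f (Ici 0))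
    (hnonneg : ∀ s ≥ 0, 0 ≤ f s) (hμ : 0 ≤ μ)
    (hint : IntegrableOn (fun s => f s * exp (-μ * s)) (Ioi 0)) :
    ∃ C ≥ 0, ∀ t ≥ 0, f t ≤ C * exp (μ * t) := by
  set I := ∫ s in Ioi 0, f s * exp (-μ * s)
  have hI : 0 ≤ I := setIntegral_nonneg measurableSet_Ioi fun s hs =>
    mul_nonneg (hnonneg s hs.le) (exp_nonneg _)
  refine ⟨I * exp μ, by positivity, fun t ht => ?_⟩
  have key := hmono.mul_exp_le_integral hnonneg hμ hint ht
  rw [neg_mul, exp_neg, ← div_eq_mul_inv, div_le_iff₀ (exp_pos _)] at key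
  calc f t ≤ I * exp (μ * (t + 1)) := key
    _ = I * exp μ * exp (μ * t) := by rw [mul_add, mul_one, exp_add]; ring

theorem cos_mul_exp_abs_le_re_cosh {a h : ℝ} {z : ℂ} (ha : 0 ≤ a) (hah : a * h ≤ π / 2)
    (hz : |z.im| ≤ h) : cos (a * h) * exp (a * |z.re|) / 2 ≤ (Complex.cosh (a * z)).re := by
  have hcos : cos (a * h) ≤ cos (a * z.im) := by
    rw [← cos_abs (a * z.im), abs_mul, abs_of_nonneg ha]
    exact cos_le_cos_of_nonneg_of_le_pi (by positivity) (by linarith [pi_pos])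
      (mul_le_mul_of_nonneg_left hz ha)
  have hcosh : exp (a * |z.re|) / 2 ≤ cosh (a * z.re) := by
    simpa [abs_mul, abs_of_nonneg ha] using exp_abs_div_two_le_cosh (a * z.re)
  have hcos_nonneg : 0 ≤ cos (a * h) :=
    cos_nonneg_of_neg_pi_div_two_le_of_le (by nlinarith [pi_pos, abs_nonneg z.im]) hah
  rw [Complex.cosh_re, Complex.re_ofReal_mul, Complex.im_ofReal_mul]
  calc cos (a * h) * exp (a * |z.re|) / 2 = cos (a * h) * (exp (a * |z.re|) / 2) := by ring
    _ ≤ cos (a * h) * cosh (a * z.re) := mul_le_mul_of_nonneg_left hcosh hcos_nonneg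
    _ ≤ cosh (a * z.re) * cos (a * z.im) := by
        rw [mul_comm]; exact mul_le_mul_of_nonneg_left hcos (cosh_pos _).le

theorem exists_differentiable_exp_mul_exp_le_norm_of_abs_im_le {a h C : ℝ} (ha : 0 ≤ a)
    (hh : 0 ≤ h) (hah : a * h < π / 2) (hC : 0 ≤ C) :
    ∃ Q : ℂ → ℂ, Differentiable ℂ Q ∧
      ∀ z : ℂ, |z.im| ≤ h → exp (C * exp (a * |z.re|)) ≤ ‖Q z‖ := by
  have hcos : 0 < cos (a * h) := cos_pos_of_mem_Ioo ⟨by nlinarith [pi_pos], hah⟩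
  set K := 2 * C / cos (a * h)
  refine ⟨fun z => Complex.exp (K * Complex.cosh (a * z)), by fun_prop, fun z hz => ?_⟩
  rw [Complex.norm_exp, Complex.re_ofReal_mul, exp_le_exp]
  calc C * exp (a * |z.re|) = K * (cos (a * h) * exp (a * |z.re|) / 2) := by
        simp only [K]; field_simp
    _ ≤ K * (Complex.cosh (a * z)).re :=
        mul_le_mul_of_nonneg_left (cos_mul_exp_abs_le_re_cosh ha hah.le hz) (by positivity)

theorem stmt_9_general (w : ℕ → ℝ → ℝ)
    (hmono : ∀ N, MonotoneOn (w N) (Set.Ici 0))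
    (hpos : ∀ N, ∀ t ≥ (0:ℝ), 0 ≤ w N t)
    (heps : ∀ N, ∀ μ > (0:ℝ), MeasureTheory.IntegrableOn
      (fun t => w N t * Real.exp (-μ * t)) (Set.Ioi (0:ℝ))) :
    ∀ N : ℕ, ∀ h > (0:ℝ), ∃ Q : ℂ → ℂ,
      DifferentiableOn ℂ Q {z : ℂ | |z.im| < h} ∧
      ∀ ξ : ℂ, |ξ.im| < h → Real.exp (w N |ξ.re|) ≤ ‖Q ξ‖ := by
  intro N h hh
  set a := π / (4 * h)
  have ha : 0 < a := by positivity
  have hah : a * h < π / 2 := by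
    have : a * h = π / 4 := by simp only [a]; field_simp
    linarith [pi_pos]
  obtain ⟨C, hC, hwC⟩ := (hmono N).exists_le_mul_exp (hpos N) ha.le (heps N a ha)
  obtain ⟨Q, hQ, hQC⟩ :=
    exists_differentiable_exp_mul_exp_le_norm_of_abs_im_le ha.le hh.le hah hC
  refine ⟨Q, hQ.differentiableOn, fun ξ hξ => ?_⟩
  exact (exp_le_exp.2 (hwC _ (abs_nonneg _))).trans (hQC ξ hξ.le)

theorem stmt_9 (w : ℕ → ℝ → ℝ)
    (hmono : ∀ N, MonotoneOn (w N) (Set.Ici 0))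
    (hpos : ∀ N, ∀ t ≥ (0:ℝ), 0 ≤ w N t)
    (hunb : ∀ N, ∀ C : ℝ, ∃ t ≥ (0:ℝ), C ≤ w N t)
    (hsys : ∀ N, ∀ t ≥ (0:ℝ), w N t ≤ w (N+1) t)
    (heps : ∀ N, ∀ μ > (0:ℝ), MeasureTheory.IntegrableOn
      (fun t => w N t * Real.exp (-μ * t)) (Set.Ioi (0:ℝ))) :
    ∀ N : ℕ, ∀ h > (0:ℝ), ∃ Q : ℂ → ℂ,
      DifferentiableOn ℂ Q {z : ℂ | |z.im| < h} ∧
      ∀ ξ : ℂ, |ξ.im| < h → Real.exp (w N |ξ.re|) ≤ ‖Q ξ‖ :=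
  stmt_9_general w hmono hpos heps
end

section
/- Let 𝒳 = (X_n, ρ_m^n) be a projective spectrum of Fréchet spaces with continuous linking maps such that for every n there exists m > n with ρ_m^n(X_m) contained in the closure in X_n of ρ_k^n(X_k) for every k > m. Then the derived projective limit Proj¹ 𝒳 vanishes: the map Ψ : ∏_n X_n → ∏_n X_n, (x_n) ↦ (x_n - ρ_{n+1}^n(x_{n+1})), is surjective. -/
/-!
Pass to a subsequence `φ` along which the image of each linking map lies in the closure of the
image of the next one. The partial sums `Sₙᵖ = ∑_{n ≤ i < p} ρⁿᵢ yᵢ` solve `Ψ x = y` below level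
`p`, but need not converge as `p → ∞`. Corrected by `ρⁿ_{φ(m+1)} z_m`, with `z_{m+1}` chosen by
density so that in each of the finitely many coordinates `n ≤ m` consecutive approximations differ
by an element of `U_{m+1}`, where `(U_k)` is a basis of neighbourhoods of zero with
`U_{k+1} + U_{k+1} ⊆ U_k`, they become coordinatewise Cauchy. By completeness they converge, and
the limit solves `Ψ x = y` because `Ψ` is continuous.
-/

open Filter Topology Set Pointwise

lemma cauchySeq_of_sub_succ_mem {G : Type*} [AddGroup G] [UniformSpace G] [IsUniformAddGroup G]
    {u : ℕ → Set G} (hu : (𝓝 0).HasAntitoneBasis u) (hadd : ∀ k, u (k + 1) + u (k + 1) ⊆ u k)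
    {f : ℕ → G} {N₀ : ℕ} (hf : ∀ m ≥ N₀, f (m + 1) - f m ∈ u (m + 1)) : CauchySeq f := by
  have tail : ∀ d, ∀ m ≥ N₀, f (m + d) - f m ∈ u m := by
    intro d
    induction d with
    | zero => intro m _; simpa using mem_of_mem_nhds (hu.mem m)
    | succ d ih =>
      intro m hm
      have h := hadd m (add_mem_add (ih (m + 1) (by omega)) (hf m hm))
      rwa [sub_add_sub_cancel, add_right_comm] at h
  refine hu.toHasBasis.uniformity_of_nhds_zero_swapped.cauchySeq_iff'.2 fun i _ =>
    ⟨max N₀ i, fun n hn => ?_⟩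
  obtain ⟨d, rfl⟩ := Nat.exists_eq_add_of_le hn
  exact hu.antitone (le_max_right _ _) (tail d _ (le_max_left _ _))

lemma exists_seq_of_forall_exists_succ {Y : ℕ → Type*} (R : ∀ m, Y m → Y (m + 1) → Prop)
    (h : ∀ m a, ∃ b, R m a b) (y₀ : Y 0) : ∃ z : ∀ m, Y m, ∀ m, R m (z m) (z (m + 1)) := by
  choose next hnext using h
  exact ⟨fun m => Nat.rec y₀ next m, fun m => hnext m _⟩

lemma exists_sub_mem_of_mem_closure_range {A Z : Type*} [AddGroup Z] [TopologicalSpace Z]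
    [IsTopologicalAddGroup Z] {g : A → Z} {w : Z} (hw : w ∈ closure (range g)) {P : Z → Prop}
    (hP : ∀ᶠ v in 𝓝 0, P v) : ∃ a, P (g a - w) := by
  have hPw : ∀ᶠ v in 𝓝 w, P (v - w) :=
    ((continuous_id.sub continuous_const).tendsto' w 0 (sub_self w)).eventually hP
  obtain ⟨_, ⟨a, rfl⟩, ha⟩ := ((mem_closure_iff_frequently.1 hw).and_eventually hPw).exists
  exact ⟨a, ha⟩

namespace ProjectiveSpectrum

section Linking

variable {R : Type*} [Semiring R] {X : ℕ → Type*} [∀ n, AddCommGroup (X n)]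
  [∀ n, Module R (X n)] [∀ n, TopologicalSpace (X n)] (ρ : ∀ n m : ℕ, n ≤ m → X m →L[R] X n)

def partialSum (y : ∀ n, X n) (n k : ℕ) : X n :=
  ∑ i ∈ Finset.Ico n k, if h : n ≤ i then ρ n i h (y i) else 0

lemma partialSum_eq_add
    (hcomp : ∀ (n m k : ℕ) (h1 : n ≤ m) (h2 : m ≤ k) (x : X k),
      ρ n m h1 (ρ m k h2 x) = ρ n k (h1.trans h2) x)
    (y : ∀ n, X n) {n a b : ℕ} (hna : n ≤ a) (hab : a ≤ b) :
    partialSum ρ y n b = partialSum ρ y n a + ρ n a hna (partialSum ρ y a b) := by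
  rw [partialSum, ← Finset.sum_Ico_consecutive _ hna hab, partialSum, partialSum, map_sum]
  congr 1
  refine Finset.sum_congr rfl fun i hi => ?_
  rw [Finset.mem_Ico] at hi
  rw [dif_pos hi.1, dif_pos (hna.trans hi.1), hcomp]

lemma partialSum_self_succ (hid : ∀ n (x : X n), ρ n n le_rfl x = x) (y : ∀ n, X n) (n : ℕ) :
    partialSum ρ y n (n + 1) = y n := by
  rw [partialSum, Nat.Ico_succ_singleton, Finset.sum_singleton, dif_pos le_rfl, hid]

lemma partialSum_sub_link (hid : ∀ n (x : X n), ρ n n le_rfl x = x)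
    (hcomp : ∀ (n m k : ℕ) (h1 : n ≤ m) (h2 : m ≤ k) (x : X k),
      ρ n m h1 (ρ m k h2 x) = ρ n k (h1.trans h2) x)
    (y : ∀ n, X n) {n k : ℕ} (h : n + 1 ≤ k) :
    partialSum ρ y n k - ρ n (n + 1) n.le_succ (partialSum ρ y (n + 1) k) = y n := by
  rw [partialSum_eq_add ρ hcomp y n.le_succ h, partialSum_self_succ ρ hid, add_sub_cancel_right]

def approxSolution (y : ∀ n, X n) (p : ℕ) (z : X p) (n : ℕ) : X n :=
  if h : n ≤ p then partialSum ρ y n p + ρ n p h z else 0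

lemma approxSolution_sub_link (hid : ∀ n (x : X n), ρ n n le_rfl x = x)
    (hcomp : ∀ (n m k : ℕ) (h1 : n ≤ m) (h2 : m ≤ k) (x : X k),
      ρ n m h1 (ρ m k h2 x) = ρ n k (h1.trans h2) x)
    (y : ∀ n, X n) {n p : ℕ} (h : n + 1 ≤ p) (z : X p) :
    approxSolution ρ y p z n - ρ n (n + 1) n.le_succ (approxSolution ρ y p z (n + 1)) = y n := by
  rw [approxSolution, approxSolution, dif_pos (n.le_succ.trans h), dif_pos h, map_add, hcomp,
    ← partialSum_sub_link ρ hid hcomp y h]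
  abel

lemma approxSolution_sub_approxSolution
    (hcomp : ∀ (n m k : ℕ) (h1 : n ≤ m) (h2 : m ≤ k) (x : X k),
      ρ n m h1 (ρ m k h2 x) = ρ n k (h1.trans h2) x)
    (y : ∀ n, X n) {n p q : ℕ} (hnp : n ≤ p) (hpq : p ≤ q) (a : X p) (b : X q) :
    approxSolution ρ y q b n - approxSolution ρ y p a n =
      ρ n q (hnp.trans hpq) b - ρ n p hnp (a - partialSum ρ y p q) := by
  rw [approxSolution, approxSolution, dif_pos (hnp.trans hpq), dif_pos hnp,
    partialSum_eq_add ρ hcomp y hnp hpq, map_sub]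
  abel

lemma exists_link_sub_link_mem [∀ n, IsTopologicalAddGroup (X n)]
    (hcomp : ∀ (n m k : ℕ) (h1 : n ≤ m) (h2 : m ≤ k) (x : X k),
      ρ n m h1 (ρ m k h2 x) = ρ n k (h1.trans h2) x)
    {m p q r : ℕ} (hmp : m ≤ p) (hpq : p ≤ q) (hqr : q ≤ r)
    (hdense : range (ρ p q hpq) ⊆ closure (range (ρ p r (hpq.trans hqr))))
    {V : ∀ n, Set (X n)} (hV : ∀ n, V n ∈ 𝓝 0) (a : X q) :
    ∃ b : X r, ∀ n (hn : n ≤ m),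
      ρ n r (hn.trans (hmp.trans (hpq.trans hqr))) b - ρ n q (hn.trans (hmp.trans hpq)) a ∈ V n := by
  have hle (i : Fin (m + 1)) : (i : ℕ) ≤ p := (Nat.le_of_lt_succ i.isLt).trans hmp
  have hnhds : ∀ᶠ v in 𝓝 (0 : X p), ∀ i : Fin (m + 1), ρ i p (hle i) v ∈ V i :=
    eventually_all.2 fun i =>
      ((ρ i p (hle i)).continuous.tendsto' 0 0 (map_zero _)).eventually_mem (hV i)
  obtain ⟨b, hb⟩ := exists_sub_mem_of_mem_closure_range (hdense ⟨a, rfl⟩) hnhds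
  refine ⟨b, fun n hn => ?_⟩
  simpa only [map_sub, hcomp] using hb ⟨n, Nat.lt_succ_of_le hn⟩

end Linking

lemma exists_cauchySeq_approxSolution {R : Type*} [Semiring R] {X : ℕ → Type*}
    [∀ n, AddCommGroup (X n)] [∀ n, Module R (X n)] [∀ n, UniformSpace (X n)]
    [∀ n, IsUniformAddGroup (X n)] [∀ n, FirstCountableTopology (X n)]
    (ρ : ∀ n m : ℕ, n ≤ m → X m →L[R] X n)
    (hcomp : ∀ (n m k : ℕ) (h1 : n ≤ m) (h2 : m ≤ k) (x : X k),
      ρ n m h1 (ρ m k h2 x) = ρ n k (h1.trans h2) x)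
    (y : ∀ n, X n) {φ : ℕ → ℕ} (hφ : StrictMono φ)
    (hdense : ∀ j, range (ρ (φ j) (φ (j + 1)) (hφ.monotone j.le_succ)) ⊆
      closure (range (ρ (φ j) (φ (j + 2)) (hφ.monotone (by omega))))) :
    ∃ z : ∀ m, X (φ (m + 1)), ∀ n, CauchySeq fun m => approxSolution ρ y (φ (m + 1)) (z m) n := by
  have hle {n m : ℕ} (h : n ≤ m) : n ≤ φ m := h.trans hφ.le_apply
  choose U hU hUadd using fun n => IsTopologicalAddGroup.exists_antitone_basis_nhds_zero (X n)
  obtain ⟨z, hz⟩ := exists_seq_of_forall_exists_succ (Y := fun m => X (φ (m + 1)))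
    (fun m a b => ∀ n (hn : n ≤ m), ρ n (φ (m + 2)) (hle (by omega)) b -
      ρ n (φ (m + 1)) (hle (by omega)) (a - partialSum ρ y (φ (m + 1)) (φ (m + 2))) ∈ U n (m + 1))
    (fun m a => exists_link_sub_link_mem ρ hcomp hφ.le_apply (hφ.monotone (by omega))
      (hφ.monotone (by omega)) (hdense m) (fun n => (hU n).mem (m + 1)) _) 0
  refine ⟨z, fun n => cauchySeq_of_sub_succ_mem (hU n) (hUadd n) (N₀ := n) fun m hm => ?_⟩
  rw [approxSolution_sub_approxSolution ρ hcomp y (hle (by omega)) (hφ.monotone (by omega))]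
  exact hz m n hm

end ProjectiveSpectrum

theorem stmt_10_general (X : ℕ → Type*) [∀ n, AddCommGroup (X n)] [∀ n, Module ℝ (X n)]
    [∀ n, UniformSpace (X n)] [∀ n, IsUniformAddGroup (X n)]
    [∀ n, TopologicalSpace.MetrizableSpace (X n)] [∀ n, CompleteSpace (X n)]
    (ρ : ∀ n m : ℕ, n ≤ m → X m →L[ℝ] X n)
    (hid : ∀ n (x : X n), ρ n n le_rfl x = x)
    (hcomp : ∀ (n m k : ℕ) (h1 : n ≤ m) (h2 : m ≤ k) (x : X k),
      ρ n m h1 (ρ m k h2 x) = ρ n k (h1.trans h2) x)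
    (hdense : ∀ n : ℕ, ∃ m : ℕ, ∃ h : n < m, ∀ k : ℕ, ∀ h2 : m < k,
      Set.range (ρ n m h.le) ⊆ closure (Set.range (ρ n k (h.le.trans h2.le)))) :
    ∀ y : (∀ n, X n), ∃ x : (∀ n, X n),
      ∀ n, x n - ρ n (n+1) (Nat.le_succ n) (x (n+1)) = y n := by
  intro y
  obtain ⟨φ, hφ⟩ := exists_seq_of_forall_exists_succ (Y := fun _ => ℕ) (fun _ p q => ∃ h : p < q,
    ∀ k (h2 : q < k), range (ρ p q h.le) ⊆ closure (range (ρ p k (h.le.trans h2.le))))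
    (fun _ p => hdense p) 0
  have hφmono : StrictMono φ := strictMono_nat_of_lt_succ fun j => (hφ j).1
  obtain ⟨z, hz⟩ := ProjectiveSpectrum.exists_cauchySeq_approxSolution ρ hcomp y hφmono
    fun j => (hφ j).2 _ (hφmono (j + 1).lt_succ_self)
  choose x hx using fun n => cauchySeq_tendsto_of_complete (hz n)
  refine ⟨x, fun n => ?_⟩
  have hlim := (hx n).sub (((ρ n (n + 1) n.le_succ).continuous.tendsto _).comp (hx (n + 1)))
  refine tendsto_nhds_unique (hlim.congr' ?_) tendsto_const_nhds
  filter_upwards [eventually_ge_atTop n] with m hm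
  exact ProjectiveSpectrum.approxSolution_sub_link ρ hid hcomp y
    ((Nat.succ_le_succ hm).trans hφmono.le_apply) _

/-- Abstract Mittag-Leffler lemma: for a projective spectrum of Fréchet spaces
(complete metrizable locally convex spaces) whose linking maps satisfy the density
condition, the derived projective limit vanishes, i.e. `Ψ` is surjective. -/
theorem stmt_10 (X : ℕ → Type*) [∀ n, AddCommGroup (X n)] [∀ n, Module ℝ (X n)]
    [∀ n, UniformSpace (X n)] [∀ n, IsUniformAddGroup (X n)]
    [∀ n, ContinuousSMul ℝ (X n)] [∀ n, LocallyConvexSpace ℝ (X n)]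
    [∀ n, TopologicalSpace.MetrizableSpace (X n)] [∀ n, CompleteSpace (X n)]
    (ρ : ∀ n m : ℕ, n ≤ m → X m →L[ℝ] X n)
    (hid : ∀ n (x : X n), ρ n n le_rfl x = x)
    (hcomp : ∀ (n m k : ℕ) (h1 : n ≤ m) (h2 : m ≤ k) (x : X k),
      ρ n m h1 (ρ m k h2 x) = ρ n k (h1.trans h2) x)
    (hdense : ∀ n : ℕ, ∃ m : ℕ, ∃ h : n < m, ∀ k : ℕ, ∀ h2 : m < k,
      Set.range (ρ n m h.le) ⊆ closure (Set.range (ρ n k (h.le.trans h2.le)))) :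
    ∀ y : (∀ n, X n), ∃ x : (∀ n, X n),
      ∀ n, x n - ρ n (n+1) (Nat.le_succ n) (x (n+1)) = y n :=
  stmt_10_general X ρ hid hcomp hdense
end

section
/- Let F, G ∈ 𝓕(ℝ) and let W = (w_N) be a weight function system satisfying (α). Let f be holomorphic on T^{F,G} such that for all N ∈ ℕ and a ∈ (0,1), sup over ξ in the closure of T^{aF,aG} of e^{w_N(|Re ξ|)} |f(ξ)| is finite. Then for every multi-index α, every N ∈ ℕ, and every a ∈ (0,1), sup over ξ in the closure of T^{aF,aG} of e^{w_N(|Re ξ|)} |f^{(α)}(ξ)| is finite. More precisely, for every a ∈ (0,1), N ∈ ℕ, and k ∈ ℕ there exist b ∈ (a,1), M > N, ε > 0, and a constant C' > 0 such that for every such f and every derivative of order k: sup_{ξ ∈ closure(T^{aF,aG})} e^{w_N(|Re ξ|)} |f^{(k)}(ξ)| ≤ C' · sup_{ξ ∈ closure(T^{bF,bG})} e^{w_M(|Re ξ|)} |f(ξ)|. -/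
open Set

lemma cauchy_est {f : ℂ → ℂ} {c : ℂ} {ε K : ℝ} (hε : 0 < ε)
    (hd : DifferentiableOn ℂ f (Metric.closedBall c ε))
    (hK : ∀ z ∈ Metric.sphere c ε, ‖f z‖ ≤ K) (k : ℕ) :
    ‖iteratedDeriv k f c‖ ≤ (k.factorial : ℝ) * K / ε ^ k := by
  set R : NNReal := ⟨ε, hε.le⟩ with hRdef
  have hRε : (R : ℝ) = ε := rfl
  have hR0 : 0 < R := by rwa [← NNReal.coe_lt_coe, NNReal.coe_zero, hRε]
  have h : HasFPowerSeriesOnBall f (cauchyPowerSeries f c R) c R := by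
    apply DifferentiableOn.hasFPowerSeriesOnBall _ hR0
    rwa [hRε]
  have h1 : (k.factorial : ℕ) • (cauchyPowerSeries f c R k (fun _ ↦ (1:ℂ)))
      = iteratedDeriv k f c := by
    rw [h.factorial_smul (1:ℂ) k, iteratedDeriv_eq_iteratedFDeriv]
  have hKnn : 0 ≤ K := by
    refine le_trans (norm_nonneg (f (c + ε))) (hK (c + ε) ?_)
    simp [Complex.dist_eq, abs_of_nonneg hε.le]
  have h2 : ‖iteratedDeriv k f c‖ ≤ (k.factorial : ℝ) * ‖cauchyPowerSeries f c R k‖ := by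
    rw [← h1, ← Nat.cast_smul_eq_nsmul ℝ, norm_smul, Real.norm_natCast]
    gcongr
    calc ‖cauchyPowerSeries f c R k (fun _ ↦ (1:ℂ))‖
        ≤ ‖cauchyPowerSeries f c (R:ℝ) k‖ * ∏ _i : Fin k, ‖(1:ℂ)‖ :=
          (cauchyPowerSeries f c (R:ℝ) k).le_opNorm _
      _ = ‖cauchyPowerSeries f c (R:ℝ) k‖ := by simp
  have h3 : ‖cauchyPowerSeries f c (R:ℝ) k‖ ≤
      ((2 * Real.pi)⁻¹ * ∫ θ : ℝ in (0)..2 * Real.pi, ‖f (circleMap c (R:ℝ) θ)‖)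
        * |(R:ℝ)|⁻¹ ^ k :=
    norm_cauchyPowerSeries_le f c (R:ℝ) k
  have hcont : Continuous fun θ : ℝ => ‖f (circleMap c (R:ℝ) θ)‖ := by
    apply Continuous.norm
    apply hd.continuousOn.comp_continuous (continuous_circleMap c (R:ℝ))
    intro θ
    rw [← hRε]
    exact Metric.sphere_subset_closedBall (circleMap_mem_sphere c (by rw [hRε]; exact hε.le) θ)
  have h4 : (∫ θ : ℝ in (0)..2 * Real.pi, ‖f (circleMap c (R:ℝ) θ)‖) ≤ 2 * Real.pi * K := by
    calc (∫ θ : ℝ in (0)..2 * Real.pi, ‖f (circleMap c (R:ℝ) θ)‖)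
        ≤ ∫ _θ : ℝ in (0)..2 * Real.pi, K := by
          apply intervalIntegral.integral_mono_on Real.two_pi_pos.le
            (hcont.intervalIntegrable _ _) (intervalIntegrable_const)
          intro θ _
          refine hK _ ?_
          rw [← hRε]
          exact circleMap_mem_sphere c (by rw [hRε]; exact hε.le) θ
      _ = 2 * Real.pi * K := by simp [mul_comm]
  have habs : |(R:ℝ)| = ε := by rw [hRε]; exact abs_of_nonneg hε.le
  have hint : (2 * Real.pi)⁻¹ * (∫ θ : ℝ in (0)..2 * Real.pi, ‖f (circleMap c (R:ℝ) θ)‖) ≤ K := by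
    calc (2 * Real.pi)⁻¹ * (∫ θ : ℝ in (0)..2 * Real.pi, ‖f (circleMap c (R:ℝ) θ)‖)
        ≤ (2 * Real.pi)⁻¹ * (2 * Real.pi * K) :=
          mul_le_mul_of_nonneg_left h4 (by positivity)
      _ = K := by field_simp
  have h5 : ‖cauchyPowerSeries f c (R:ℝ) k‖ ≤ K * (ε⁻¹) ^ k := by
    refine h3.trans ?_
    rw [habs]
    exact mul_le_mul_of_nonneg_right hint (by positivity)
  calc ‖iteratedDeriv k f c‖ ≤ (k.factorial : ℝ) * ‖cauchyPowerSeries f c R k‖ := h2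
    _ ≤ (k.factorial : ℝ) * (K * ε⁻¹ ^ k) :=
        mul_le_mul_of_nonneg_left h5 (Nat.cast_nonneg _)
    _ = (k.factorial : ℝ) * K / ε ^ k := by rw [inv_pow]; ring

set_option maxHeartbeats 1000000 in
theorem stmt_11 (F G : ℝ → ℝ) (hF : memF F) (hG : memF G)
    (w : ℕ → ℝ → ℝ)
    (hmono : ∀ N, MonotoneOn (w N) (Set.Ici 0))
    (hpos : ∀ N, ∀ t ≥ (0:ℝ), 0 ≤ w N t)
    (hunb : ∀ N, ∀ C : ℝ, ∃ t ≥ (0:ℝ), C ≤ w N t)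
    (hsys : ∀ N, ∀ t ≥ (0:ℝ), w N t ≤ w (N+1) t)
    (halpha : ∀ N : ℕ, ∃ M > N, ∃ A > (1:ℝ), ∀ t ≥ (0:ℝ),
      w N (2 * t) ≤ w M t + Real.log A) :
    -- qualitative statement
    (∀ f : ℂ → ℂ, DifferentiableOn ℂ f (genStrip F G) →
      (∀ N : ℕ, ∀ a ∈ Set.Ioo (0:ℝ) 1, ∃ B : ℝ,
        ∀ ξ ∈ closure (genStrip (fun t => a * F t) (fun t => a * G t)),
          Real.exp (w N |ξ.re|) * ‖f ξ‖ ≤ B) →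
      ∀ k N : ℕ, ∀ a ∈ Set.Ioo (0:ℝ) 1, ∃ B : ℝ,
        ∀ ξ ∈ closure (genStrip (fun t => a * F t) (fun t => a * G t)),
          Real.exp (w N |ξ.re|) * ‖iteratedDeriv k f ξ‖ ≤ B) ∧
    -- quantitative statement
    (∀ a ∈ Set.Ioo (0:ℝ) 1, ∀ N k : ℕ,
      ∃ b ∈ Set.Ioo a 1, ∃ M > N, ∃ ε > (0:ℝ), ∃ C' > (0:ℝ),
        ∀ f : ℂ → ℂ, DifferentiableOn ℂ f (genStrip F G) →
          (∀ N' : ℕ, ∀ a' ∈ Set.Ioo (0:ℝ) 1, ∃ B : ℝ,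
            ∀ ξ ∈ closure (genStrip (fun t => a' * F t) (fun t => a' * G t)),
              Real.exp (w N' |ξ.re|) * ‖f ξ‖ ≤ B) →
          ∀ B : ℝ,
            (∀ ξ ∈ closure (genStrip (fun t => b * F t) (fun t => b * G t)),
              Real.exp (w M |ξ.re|) * ‖f ξ‖ ≤ B) →
            ∀ ξ ∈ closure (genStrip (fun t => a * F t) (fun t => a * G t)),
              Real.exp (w N |ξ.re|) * ‖iteratedDeriv k f ξ‖ ≤ C' * B) := by
  obtain ⟨hFuc, ⟨mF, hmF0, hmF⟩, -⟩ := hF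
  obtain ⟨hGuc, ⟨mG, hmG0, hmG⟩, -⟩ := hG
  have hFc : Continuous F := hFuc.continuous
  have hGc : Continuous G := hGuc.continuous
  have hclos : ∀ r : ℝ, closure (genStrip (fun t => r * F t) (fun t => r * G t)) ⊆
      {z : ℂ | -(r * G z.re) ≤ z.im ∧ z.im ≤ r * F z.re} := by
    intro r
    apply closure_minimal
    · intro z hz
      exact ⟨hz.1.le, hz.2.le⟩
    · have h1 : IsClosed {z : ℂ | -(r * G z.re) ≤ z.im} :=
        isClosed_le (by fun_prop) Complex.continuous_im
      have h2 : IsClosed {z : ℂ | z.im ≤ r * F z.re} :=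
        isClosed_le Complex.continuous_im (by fun_prop)
      exact h1.inter h2
  have hquant : (∀ a ∈ Set.Ioo (0:ℝ) 1, ∀ N k : ℕ,
      ∃ b ∈ Set.Ioo a 1, ∃ M > N, ∃ ε > (0:ℝ), ∃ C' > (0:ℝ),
        ∀ f : ℂ → ℂ, DifferentiableOn ℂ f (genStrip F G) →
          (∀ N' : ℕ, ∀ a' ∈ Set.Ioo (0:ℝ) 1, ∃ B : ℝ,
            ∀ ξ ∈ closure (genStrip (fun t => a' * F t) (fun t => a' * G t)),
              Real.exp (w N' |ξ.re|) * ‖f ξ‖ ≤ B) →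
          ∀ B : ℝ,
            (∀ ξ ∈ closure (genStrip (fun t => b * F t) (fun t => b * G t)),
              Real.exp (w M |ξ.re|) * ‖f ξ‖ ≤ B) →
            ∀ ξ ∈ closure (genStrip (fun t => a * F t) (fun t => a * G t)),
              Real.exp (w N |ξ.re|) * ‖iteratedDeriv k f ξ‖ ≤ C' * B) := by
    intro a ha N k
    obtain ⟨ha0, ha1⟩ := ha
    set b := (a + 1) / 2 with hbdef
    have hab : a < b := by rw [hbdef]; linarith
    have hb1 : b < 1 := by rw [hbdef]; linarith
    have hb0 : 0 < b := lt_trans ha0 hab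
    set m := min mF mG with hmdef
    have hm : 0 < m := lt_min hmF0 hmG0
    have hmF' : ∀ t, m ≤ F t := fun t => le_trans (min_le_left _ _) (hmF t)
    have hmG' : ∀ t, m ≤ G t := fun t => le_trans (min_le_right _ _) (hmG t)
    set c := (b - a) * m with hcdef
    have hc : 0 < c := mul_pos (by linarith) hm
    obtain ⟨δF, hδF0, hδF⟩ := Metric.uniformContinuous_iff.mp hFuc (c/4) (by linarith)
    obtain ⟨δG, hδG0, hδG⟩ := Metric.uniformContinuous_iff.mp hGuc (c/4) (by linarith)
    set ε := min (min δF δG / 2) (c/4) with hεdef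
    clear_value ε
    have hε0 : 0 < ε := by
      rw [hεdef]; exact lt_min (by positivity) (by linarith)
    have hεδ : min δF δG / 2 < min δF δG := half_lt_self (lt_min hδF0 hδG0)
    have hεδF : ε < δF := by
      rw [hεdef]
      exact lt_of_le_of_lt (min_le_left _ _) (lt_of_lt_of_le hεδ (min_le_left _ _))
    have hεδG : ε < δG := by
      rw [hεdef]
      exact lt_of_le_of_lt (min_le_left _ _) (lt_of_lt_of_le hεδ (min_le_right _ _))
    have hεc : ε ≤ c / 4 := by rw [hεdef]; exact min_le_right _ _
    clear hεdef
    -- geometric lemma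
    have hgeo : ∀ ξ ∈ closure (genStrip (fun t => a * F t) (fun t => a * G t)),
        ∀ z ∈ Metric.closedBall ξ ε,
          z ∈ genStrip (fun t => b * F t) (fun t => b * G t) := by
      intro ξ hξ z hz
      obtain ⟨hξ1, hξ2⟩ := hclos a hξ
      rw [Metric.mem_closedBall, Complex.dist_eq] at hz
      have hre : |z.re - ξ.re| ≤ ε := by
        have h := Complex.abs_re_le_norm (z - ξ)
        rw [Complex.sub_re] at h
        exact le_trans h hz
      have him : |z.im - ξ.im| ≤ ε := by
        have h := Complex.abs_im_le_norm (z - ξ)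
        rw [Complex.sub_im] at h
        exact le_trans h hz
      have hdre : dist z.re ξ.re ≤ ε := by rwa [Real.dist_eq]
      have hFd : |F z.re - F ξ.re| < c / 4 := by
        have h := hδF (lt_of_le_of_lt hdre hεδF)
        rwa [Real.dist_eq] at h
      have hGd : |G z.re - G ξ.re| < c / 4 := by
        have h := hδG (lt_of_le_of_lt hdre hεδG)
        rwa [Real.dist_eq] at h
      obtain ⟨hF1, hF2⟩ := abs_lt.mp hFd
      obtain ⟨hG1, hG2⟩ := abs_lt.mp hGd
      have himε : |z.im - ξ.im| ≤ c / 4 := le_trans him hεc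
      obtain ⟨hi1', hi2'⟩ := abs_le.mp himε
      constructor
      · -- lower side
        have h2 : (b - a) * m ≤ (b - a) * G z.re :=
          mul_le_mul_of_nonneg_left (hmG' z.re) (by linarith)
        have h5 : a * G ξ.re ≤ a * (G z.re + c / 4) :=
          mul_le_mul_of_nonneg_left (by linarith) ha0.le
        have haq : a * (c / 4) ≤ c / 4 := by nlinarith
        show -(b * G z.re) < z.im
        linarith [h2, h5, haq, hξ1, hi1', hcdef, hc]
      · have h2 : (b - a) * m ≤ (b - a) * F z.re :=
          mul_le_mul_of_nonneg_left (hmF' z.re) (by linarith)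
        have h5 : a * F ξ.re ≤ a * (F z.re + c / 4) :=
          mul_le_mul_of_nonneg_left (by linarith) ha0.le
        have haq : a * (c / 4) ≤ c / 4 := by nlinarith
        show z.im < b * F z.re
        linarith [h2, h5, haq, hξ2, hi2', hcdef, hc]
    have hsub : ∀ ξ ∈ closure (genStrip (fun t => a * F t) (fun t => a * G t)),
        Metric.closedBall ξ ε ⊆ genStrip F G := by
      intro ξ hξ z hz
      obtain ⟨hz1, hz2⟩ := hgeo ξ hξ z hz
      simp only at hz1 hz2
      constructor
      · have hGz : 0 < G z.re := lt_of_lt_of_le hm (hmG' z.re)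
        have : b * G z.re < G z.re := by nlinarith
        show -G z.re < z.im
        linarith
      · have hFz : 0 < F z.re := lt_of_lt_of_le hm (hmF' z.re)
        have : b * F z.re < F z.re := by nlinarith
        show z.im < F z.re
        linarith
    obtain ⟨M, hMN, A, hA1, hα⟩ := halpha N
    set Cmax := max A (Real.exp (w N (2 * ε))) with hCm
    have hCmax0 : 0 < Cmax := lt_of_lt_of_le (by linarith) (le_max_left _ _)
    set C' := (k.factorial : ℝ) / ε ^ k * Cmax with hC'
    have hC'0 : 0 < C' := by
      apply mul_pos _ hCmax0
      apply div_pos _ (pow_pos hε0 k)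
      exact_mod_cast k.factorial_pos
    refine ⟨b, ⟨hab, hb1⟩, M, hMN, ε, hε0, C', hC'0, ?_⟩
    intro f hf hfbd B hB ξ hξ
    have hstripmono : genStrip (fun t => a * F t) (fun t => a * G t) ⊆
        genStrip (fun t => b * F t) (fun t => b * G t) := by
      intro z hz
      obtain ⟨hz1, hz2⟩ := hz
      simp only at hz1 hz2
      have hGz : 0 < G z.re := lt_of_lt_of_le hm (hmG' z.re)
      have hFz : 0 < F z.re := lt_of_lt_of_le hm (hmF' z.re)
      constructor
      · show -(b * G z.re) < z.im
        nlinarith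
      · show z.im < b * F z.re
        nlinarith
    have hξb : ξ ∈ closure (genStrip (fun t => b * F t) (fun t => b * G t)) :=
      closure_mono hstripmono hξ
    have hB0 : 0 ≤ B :=
      le_trans (mul_nonneg (Real.exp_pos _).le (norm_nonneg _)) (hB ξ hξb)
    set K := Cmax * B * Real.exp (-(w N |ξ.re|)) with hKdef
    have hsphere : ∀ z ∈ Metric.sphere ξ ε, ‖f z‖ ≤ K := by
      intro z hz
      have hzball : z ∈ Metric.closedBall ξ ε := Metric.sphere_subset_closedBall hz
      have hzmem := hgeo ξ hξ z hzball
      have hzB : Real.exp (w M |z.re|) * ‖f z‖ ≤ B := hB z (subset_closure hzmem)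
      have hre : |z.re - ξ.re| ≤ ε := by
        rw [Metric.mem_sphere, Complex.dist_eq] at hz
        have h := Complex.abs_re_le_norm (z - ξ)
        rw [Complex.sub_re, hz] at h
        exact h
      have htri : |ξ.re| ≤ |z.re| + ε := by
        have h := abs_sub_abs_le_abs_sub ξ.re z.re
        rw [abs_sub_comm] at h
        linarith
      have key : Real.exp (w N |ξ.re|) ≤ Cmax * Real.exp (w M |z.re|) := by
        rcases le_or_gt ε |z.re| with hcase | hcase
        · have h2t : |ξ.re| ≤ 2 * |z.re| := by linarith
          have hmono1 : w N |ξ.re| ≤ w N (2 * |z.re|) :=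
            hmono N (mem_Ici.mpr (abs_nonneg _))
              (mem_Ici.mpr (by positivity)) h2t
          have hα' := hα |z.re| (abs_nonneg _)
          have hle : Real.exp (w N |ξ.re|) ≤ Real.exp (w M |z.re| + Real.log A) :=
            Real.exp_le_exp.mpr (le_trans hmono1 hα')
          rw [Real.exp_add, Real.exp_log (by linarith)] at hle
          calc Real.exp (w N |ξ.re|) ≤ Real.exp (w M |z.re|) * A := hle
            _ ≤ Cmax * Real.exp (w M |z.re|) := by
                rw [mul_comm]
                exact mul_le_mul_of_nonneg_right (le_max_left _ _) (Real.exp_pos _).le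
        · have h2t : |ξ.re| ≤ 2 * ε := by linarith
          have hmono1 : w N |ξ.re| ≤ w N (2 * ε) :=
            hmono N (mem_Ici.mpr (abs_nonneg _)) (mem_Ici.mpr (by positivity)) h2t
          have h1le : 1 ≤ Real.exp (w M |z.re|) := Real.one_le_exp (hpos M _ (abs_nonneg _))
          calc Real.exp (w N |ξ.re|) ≤ Real.exp (w N (2 * ε)) := Real.exp_le_exp.mpr hmono1
            _ ≤ Cmax := le_max_right _ _
            _ ≤ Cmax * Real.exp (w M |z.re|) := le_mul_of_one_le_right hCmax0.le h1le
      have hfz : ‖f z‖ ≤ B / Real.exp (w M |z.re|) := by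
        rw [le_div_iff₀ (Real.exp_pos _)]
        linarith [hzB]
      have h6 : 1 / Real.exp (w M |z.re|) ≤ Cmax / Real.exp (w N |ξ.re|) := by
        rw [div_le_div_iff₀ (Real.exp_pos _) (Real.exp_pos _)]
        linarith [key]
      calc ‖f z‖ ≤ B / Real.exp (w M |z.re|) := hfz
        _ = B * (1 / Real.exp (w M |z.re|)) := by ring
        _ ≤ B * (Cmax / Real.exp (w N |ξ.re|)) := mul_le_mul_of_nonneg_left h6 hB0
        _ = K := by rw [hKdef, Real.exp_neg]; field_simp
    have hball : Metric.closedBall ξ ε ⊆ genStrip F G := hsub ξ hξ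
    have hcau := cauchy_est hε0 (hf.mono hball) hsphere k
    calc Real.exp (w N |ξ.re|) * ‖iteratedDeriv k f ξ‖
        ≤ Real.exp (w N |ξ.re|) * ((k.factorial : ℝ) * K / ε ^ k) :=
          mul_le_mul_of_nonneg_left hcau (Real.exp_pos _).le
      _ = C' * B := by
          rw [hC', hKdef, Real.exp_neg]
          field_simp
  refine ⟨?_, hquant⟩
  intro f hf hfb k N a ha
  obtain ⟨b, hb, M, hM, ε, hε, C', hC', H⟩ := hquant a ha N k
  obtain ⟨B, hB⟩ := hfb M b ⟨lt_trans ha.1 hb.1, hb.2⟩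
  exact ⟨C' * B, fun ξ hξ => H f hf hfb B hB ξ hξ⟩
end
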